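/- arXiv:1509.04408 — 6 statements merged into one kernel-verified Lean document; each statement's English description precedes it below -/
import Mathlib

section
/- With φ_p(q) = #{(m,n) : m ≥ n ≥ 0, p ∤ C(m,n), m + n = q}, for every positive integer q and nonnegative integer k, φ_p(p^k q − 1) = ⌊(p+1)/2⌋^k · φ_p(q − 1). -/
/-!
By Lucas's theorem, `p ∤ C(m, n)` iff `p` divides neither `C(m % p, n % p)` nor
`C(m / p, n / p)`, and the first condition just says `n % p ≤ m % p`. Under it no carry
can occur in the last base-`p` digit, so when `m + n = pN + (p - 1)` the last digits satisfy
`m % p + n % p = p - 1` and the leading parts satisfy `m / p + n / p = N`. Hence the points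
on the anti-diagonal `pN + (p - 1)` are exactly the digit-wise combinations of a point on the
anti-diagonal `N` with one of the `(p + 1) / 2` pairs `(a, b)`, `a + b = p - 1`, `b ≤ a`, and
`φ_p(pN + p - 1) = (p + 1) / 2 · φ_p(N)`. Iterating along
`p^k q - 1 = p (p^(k-1) q - 1) + (p - 1)` gives the theorem. For negative arguments both
sides vanish.
-/

/-- `φ_p(q)`: number of points in Pascal's triangle mod `p` on the anti-diagonal
`m + n = q`, extended by `0` to negative integers. -/
noncomputable def phi (p : ℕ) (q : ℤ) : ℕ :=
  {mn : ℕ × ℕ | mn.2 ≤ mn.1 ∧ (mn.1 : ℤ) + (mn.2 : ℤ) = q ∧ ¬ p ∣ Nat.choose mn.1 mn.2}.ncard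

open Finset

def pascalPoints (p N : ℕ) : Finset (ℕ × ℕ) :=
  {x ∈ antidiagonal N | x.2 ≤ x.1 ∧ ¬ p ∣ x.1.choose x.2}

lemma phi_natCast (p N : ℕ) : phi p N = #(pascalPoints p N) := by
  rw [phi, ← Set.ncard_coe_finset]
  congr 1
  ext ⟨m, n⟩
  simp only [Set.mem_ofPred_eq, pascalPoints, coe_filter, HasAntidiagonal.mem_antidiagonal]
  norm_cast
  tauto

lemma phi_of_neg (p : ℕ) {x : ℤ} (hx : x < 0) : phi p x = 0 := by
  rw [phi]
  convert Set.ncard_empty (ℕ × ℕ) using 2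
  ext ⟨m, n⟩
  simp only [Set.mem_ofPred_eq, Set.mem_empty_iff_false, iff_false]
  omega

lemma Nat.Prime.dvd_choose_iff_mod_or_div {p : ℕ} (hp : p.Prime) (m n : ℕ) :
    p ∣ m.choose n ↔ p ∣ (m % p).choose (n % p) ∨ p ∣ (m / p).choose (n / p) := by
  have : Fact p.Prime := ⟨hp⟩
  rw [Nat.dvd_iff_mod_eq_zero, Choose.choose_modEq_choose_mod_mul_choose_div_nat,
    ← Nat.dvd_iff_mod_eq_zero, hp.dvd_mul]

lemma Nat.Prime.dvd_choose_iff_lt_of_lt {p a b : ℕ} (hp : p.Prime) (ha : a < p) :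
    p ∣ a.choose b ↔ a < b := by
  refine ⟨fun h => not_le.1 fun hba => ?_, fun h => by simp [Nat.choose_eq_zero_of_lt h]⟩
  exact (hp.coprime_iff_not_dvd.1 (hp.coprime_choose_of_lt ha hba)) h

lemma Nat.mod_add_mod_eq_sub_one {p m n : ℕ} (h : (m + n) % p = p - 1) :
    m % p + n % p = p - 1 := by
  rcases p.eq_zero_or_pos with rfl | hp
  · simpa using h
  have hcarry := Nat.add_mod_add_ite m n p
  have := Nat.mod_lt m hp
  have := Nat.mod_lt n hp
  split_ifs at hcarry <;> omega

lemma Nat.le_of_div_le_div_of_mod_le {p m n : ℕ} (hdiv : n / p ≤ m / p)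
    (hmod : n % p ≤ m % p) : n ≤ m := by
  rw [← Nat.div_add_mod n p, ← Nat.div_add_mod m p]
  exact Nat.add_le_add (Nat.mul_le_mul_left p hdiv) hmod

lemma mem_pascalPoints_mul_add_sub_one_iff {p : ℕ} (hp : p.Prime) {N m n : ℕ} :
    (m, n) ∈ pascalPoints p (p * N + (p - 1)) ↔
      (m / p, n / p) ∈ pascalPoints p N ∧ (m % p, n % p) ∈ pascalPoints p (p - 1) := by
  simp only [pascalPoints, mem_filter, HasAntidiagonal.mem_antidiagonal,
    hp.dvd_choose_iff_mod_or_div m n, not_or, hp.dvd_choose_iff_lt_of_lt (Nat.mod_lt m hp.pos),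
    not_lt]
  have hm := Nat.div_add_mod m p
  have hn := Nat.div_add_mod n p
  constructor
  · rintro ⟨hsum, hle, hlow, hhigh⟩
    have hdigit : m % p + n % p = p - 1 := Nat.mod_add_mod_eq_sub_one (by
      rw [hsum, Nat.mul_add_mod, Nat.mod_eq_of_lt (Nat.sub_lt hp.pos one_pos)])
    have hquot : m / p + n / p = N := Nat.eq_of_mul_eq_mul_left hp.pos (by rw [mul_add]; omega)
    exact ⟨⟨hquot, Nat.div_le_div_right hle, hhigh⟩, hdigit, hlow, hlow⟩
  · rintro ⟨⟨hquot, hle, hhigh⟩, hdigit, hlow, -⟩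
    refine ⟨?_, Nat.le_of_div_le_div_of_mod_le hle hlow, hlow, hhigh⟩
    rw [← hquot, mul_add]
    omega

lemma card_filter_snd_le_fst_antidiagonal (n : ℕ) :
    #{x ∈ antidiagonal n | x.2 ≤ x.1} = n / 2 + 1 := by
  rw [← card_range (n / 2 + 1)]
  refine card_nbij' Prod.snd (fun i => (n - i, i)) ?_ ?_ ?_ ?_ <;> intro x hx <;>
    simp only [coe_filter, coe_range, HasAntidiagonal.mem_antidiagonal, Set.mem_ofPred_eq,
      Set.mem_Iio, Prod.ext_iff, and_true] at hx ⊢ <;> omega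

lemma card_pascalPoints_sub_one {p : ℕ} (hp : p.Prime) :
    #(pascalPoints p (p - 1)) = (p + 1) / 2 := by
  have hfilter : pascalPoints p (p - 1) = {x ∈ antidiagonal (p - 1) | x.2 ≤ x.1} := by
    refine filter_congr fun x hx => ?_
    have hx₁ : x.1 < p := by
      rw [HasAntidiagonal.mem_antidiagonal] at hx
      have := hp.pos
      omega
    rw [hp.dvd_choose_iff_lt_of_lt hx₁, not_lt, and_self]
  rw [hfilter, card_filter_snd_le_fst_antidiagonal]
  have := hp.one_le
  omega

lemma card_pascalPoints_mul_add_sub_one {p : ℕ} (hp : p.Prime) (N : ℕ) :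
    #(pascalPoints p (p * N + (p - 1))) = #(pascalPoints p N) * ((p + 1) / 2) := by
  rw [← card_pascalPoints_sub_one hp, ← card_product]
  have hdigits {a b : ℕ} (h : (a, b) ∈ pascalPoints p (p - 1)) : a < p ∧ b < p := by
    simp only [pascalPoints, mem_filter, HasAntidiagonal.mem_antidiagonal] at h
    have := hp.pos
    omega
  refine card_nbij' (fun x => ((x.1 / p, x.2 / p), (x.1 % p, x.2 % p)))
    (fun y => (p * y.1.1 + y.2.1, p * y.1.2 + y.2.2)) ?_ ?_ ?_ ?_
  · rintro ⟨m, n⟩ h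
    exact mem_product.2 ((mem_pascalPoints_mul_add_sub_one_iff hp).1 h)
  · rintro ⟨⟨m, n⟩, ⟨a, b⟩⟩ h
    obtain ⟨ha, hb⟩ := hdigits (mem_product.1 h).2
    rw [mem_coe, mem_pascalPoints_mul_add_sub_one_iff hp]
    simpa only [Nat.mul_add_div hp.pos, Nat.div_eq_of_lt, Nat.mul_add_mod_self_left,
      Nat.mod_eq_of_lt, ha, hb, add_zero] using mem_product.1 h
  · rintro ⟨m, n⟩ -
    simp only [Nat.div_add_mod]
  · rintro ⟨⟨m, n⟩, ⟨a, b⟩⟩ h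
    obtain ⟨ha, hb⟩ := hdigits (mem_product.1 h).2
    simp only [Nat.mul_add_div hp.pos, Nat.div_eq_of_lt, Nat.mul_add_mod_self_left,
      Nat.mod_eq_of_lt, ha, hb, add_zero]

lemma phi_mul_add_sub_one {p : ℕ} (hp : p.Prime) (x : ℤ) :
    phi p (p * x + (p - 1)) = phi p x * ((p + 1) / 2) := by
  rcases lt_or_ge x 0 with hx | hx
  · rw [phi_of_neg p hx, phi_of_neg p (by nlinarith [hp.pos]), zero_mul]
  lift x to ℕ using hx
  have hcast : (p : ℤ) * x + (p - 1) = ((p * x + (p - 1) : ℕ) : ℤ) := by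
    push_cast [Nat.cast_sub hp.one_le]
    ring
  rw [hcast, phi_natCast, phi_natCast, card_pascalPoints_mul_add_sub_one hp]

theorem phi_pow_mul_sub_one_general (p : ℕ) (hp : p.Prime) (q : ℕ) (k : ℕ) :
    phi p ((p : ℤ) ^ k * q - 1) = ((p + 1) / 2) ^ k * phi p ((q : ℤ) - 1) := by
  induction k with
  | zero => simp
  | succ k ih =>
    rw [show (p : ℤ) ^ (k + 1) * q - 1 = p * (p ^ k * q - 1) + (p - 1) by ring,
      phi_mul_add_sub_one hp, ih, pow_succ]
    ring

theorem phi_pow_mul_sub_one (p : ℕ) (hp : p.Prime) (q : ℕ) (hq : 0 < q) (k : ℕ) :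
    phi p ((p : ℤ) ^ k * q - 1) = ((p + 1) / 2) ^ k * phi p ((q : ℤ) - 1) :=
  phi_pow_mul_sub_one_general p hp q k
end

section
/- Let N_2(u) = #{(m,n) : m ≥ n ≥ 0, C(m,n) odd, m + n < u} and φ_2(q) = #{(m,n): m ≥ n ≥ 0, C(m,n) odd, m+n = q}. Then for every positive integer u and nonnegative integer k, N_2(2^k u) = 3^k · N_2(u) − ((3^k − 1)/2) · φ_2(u − 1). -/
open Finset

/-- `φ₂(q)`: number of odd binomial coefficients on the anti-diagonal `m + n = q`. -/
noncomputable def phi2 (q : ℤ) : ℕ :=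
  {mn : ℕ × ℕ | mn.2 ≤ mn.1 ∧ (mn.1 : ℤ) + (mn.2 : ℤ) = q ∧ ¬ 2 ∣ Nat.choose mn.1 mn.2}.ncard

/-- `N₂(u)`: number of odd binomial coefficients with `m ≥ n` and `m + n < u`. -/
noncomputable def N2 (u : ℕ) : ℕ :=
  {mn : ℕ × ℕ | mn.2 ≤ mn.1 ∧ mn.1 + mn.2 < u ∧ ¬ 2 ∣ Nat.choose mn.1 mn.2}.ncard

def S2 (u : ℕ) : Finset (ℕ × ℕ) :=
  (range u ×ˢ range u).filter
    (fun mn => mn.2 ≤ mn.1 ∧ mn.1 + mn.2 < u ∧ ¬ 2 ∣ Nat.choose mn.1 mn.2)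

def T2 (v : ℕ) : Finset (ℕ × ℕ) :=
  (range (v+1) ×ˢ range (v+1)).filter
    (fun mn => mn.2 ≤ mn.1 ∧ mn.1 + mn.2 = v ∧ ¬ 2 ∣ Nat.choose mn.1 mn.2)

lemma mod2_ee (a b : ℕ) : Nat.choose (2*a) (2*b) % 2 = Nat.choose a b % 2 := by
  have h := Choose.choose_modEq_choose_mod_mul_choose_div_nat (p := 2) (n := 2*a) (k := 2*b)
  simpa [Nat.ModEq, Nat.mul_div_cancel_left, Nat.mul_mod_right] using h

lemma mod2_oe (a b : ℕ) : Nat.choose (2*a+1) (2*b) % 2 = Nat.choose a b % 2 := by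
  have h := Choose.choose_modEq_choose_mod_mul_choose_div_nat (p := 2) (n := 2*a+1) (k := 2*b)
  have h1 : (2*a+1) % 2 = 1 := by omega
  have h2 : (2*a+1) / 2 = a := by omega
  rw [h1, h2] at h
  simpa [Nat.ModEq, Nat.mul_div_cancel_left, Nat.mul_mod_right] using h

lemma mod2_oo (a b : ℕ) : Nat.choose (2*a+1) (2*b+1) % 2 = Nat.choose a b % 2 := by
  have h := Choose.choose_modEq_choose_mod_mul_choose_div_nat (p := 2) (n := 2*a+1) (k := 2*b+1)
  have h1 : (2*a+1) % 2 = 1 := by omega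
  have h2 : (2*a+1) / 2 = a := by omega
  have h3 : (2*b+1) % 2 = 1 := by omega
  have h4 : (2*b+1) / 2 = b := by omega
  rw [h1, h2, h3, h4] at h
  simpa [Nat.ModEq] using h

lemma mod2_eo (a b : ℕ) : Nat.choose (2*a) (2*b+1) % 2 = 0 := by
  have h := Choose.choose_modEq_choose_mod_mul_choose_div_nat (p := 2) (n := 2*a) (k := 2*b+1)
  have h3 : (2*b+1) % 2 = 1 := by omega
  have h4 : (2*b+1) / 2 = b := by omega
  rw [h3, h4] at h
  simpa [Nat.ModEq, Nat.mul_mod_right] using h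

lemma dvd_iff_mod (x : ℕ) : ¬ 2 ∣ x ↔ x % 2 = 1 := by omega

lemma inj00 : Function.Injective (fun p : ℕ × ℕ => (2*p.1, 2*p.2)) := by
  rintro ⟨a, b⟩ ⟨c, d⟩ h
  simp only [Prod.mk.injEq] at h
  exact Prod.ext (by omega) (by omega)

lemma inj10 : Function.Injective (fun p : ℕ × ℕ => (2*p.1+1, 2*p.2)) := by
  rintro ⟨a, b⟩ ⟨c, d⟩ h
  simp only [Prod.mk.injEq] at h
  exact Prod.ext (by omega) (by omega)

lemma inj11 : Function.Injective (fun p : ℕ × ℕ => (2*p.1+1, 2*p.2+1)) := by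
  rintro ⟨a, b⟩ ⟨c, d⟩ h
  simp only [Prod.mk.injEq] at h
  exact Prod.ext (by omega) (by omega)

lemma S2_double (u : ℕ) :
    (S2 (2*u)).card = 2 * (S2 u).card + (S2 (u-1)).card := by
  have hset : S2 (2*u) =
      ((S2 u).image (fun p => (2*p.1, 2*p.2)) ∪
        (S2 u).image (fun p => (2*p.1+1, 2*p.2))) ∪
      (S2 (u-1)).image (fun p => (2*p.1+1, 2*p.2+1)) := by
    ext ⟨m, n⟩
    simp only [S2, mem_union, mem_image, mem_filter, mem_product, mem_range]
    constructor
    · rintro ⟨⟨hm, hn⟩, hba, hsum, hodd⟩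
      rw [dvd_iff_mod] at hodd
      obtain ⟨a, rfl | rfl⟩ := Nat.even_or_odd' m <;>
        obtain ⟨b, rfl | rfl⟩ := Nat.even_or_odd' n
      · left; left
        refine ⟨(a, b), ⟨⟨by omega, by omega⟩, by omega, by omega, ?_⟩, rfl⟩
        rw [dvd_iff_mod, ← mod2_ee]; exact hodd
      · exfalso; rw [mod2_eo a b] at hodd; omega
      · left; right
        refine ⟨(a, b), ⟨⟨by omega, by omega⟩, by omega, by omega, ?_⟩, rfl⟩
        rw [dvd_iff_mod, ← mod2_oe]; exact hodd
      · right
        refine ⟨(a, b), ⟨⟨by omega, by omega⟩, by omega, by omega, ?_⟩, rfl⟩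
        rw [dvd_iff_mod, ← mod2_oo]; exact hodd
    · rintro ((⟨⟨a, b⟩, ⟨⟨ha, hb⟩, hba, hsum, hodd⟩, heq⟩ |
              ⟨⟨a, b⟩, ⟨⟨ha, hb⟩, hba, hsum, hodd⟩, heq⟩) |
              ⟨⟨a, b⟩, ⟨⟨ha, hb⟩, hba, hsum, hodd⟩, heq⟩) <;>
      rw [dvd_iff_mod] at hodd <;>
      obtain ⟨rfl, rfl⟩ := Prod.mk.injEq .. ▸ heq <;>
      simp only [Prod.mk.injEq] at heq
      · exact ⟨⟨by omega, by omega⟩, by omega, by omega,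
          by rw [dvd_iff_mod, mod2_ee]; exact hodd⟩
      · exact ⟨⟨by omega, by omega⟩, by omega, by omega,
          by rw [dvd_iff_mod, mod2_oe]; exact hodd⟩
      · exact ⟨⟨by omega, by omega⟩, by omega, by omega,
          by rw [dvd_iff_mod, mod2_oo]; exact hodd⟩
  have d1 : Disjoint ((S2 u).image (fun p => (2*p.1, 2*p.2)))
      ((S2 u).image (fun p => (2*p.1+1, 2*p.2))) := by
    simp only [Finset.disjoint_left, mem_image]
    rintro x ⟨⟨a, b⟩, _, rfl⟩ ⟨⟨c, d⟩, _, h⟩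
    simp only [Prod.mk.injEq] at h
    omega
  have d2 : Disjoint ((S2 u).image (fun p => (2*p.1, 2*p.2)) ∪
      (S2 u).image (fun p => (2*p.1+1, 2*p.2)))
      ((S2 (u-1)).image (fun p => (2*p.1+1, 2*p.2+1))) := by
    simp only [Finset.disjoint_left, mem_union, mem_image]
    rintro x (⟨⟨a, b⟩, _, rfl⟩ | ⟨⟨a, b⟩, _, rfl⟩) ⟨⟨c, d⟩, _, h⟩ <;>
      simp only [Prod.mk.injEq] at h <;> omega
  rw [hset, card_union_of_disjoint d2, card_union_of_disjoint d1,
    card_image_of_injective _ inj00, card_image_of_injective _ inj10,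
    card_image_of_injective _ inj11]
  ring

lemma S2_succ (u : ℕ) (hu : 1 ≤ u) :
    (S2 u).card = (S2 (u-1)).card + (T2 (u-1)).card := by
  have hset : S2 u = S2 (u-1) ∪ T2 (u-1) := by
    ext ⟨m, n⟩
    simp only [S2, T2, mem_union, mem_filter, mem_product, mem_range]
    constructor
    · rintro ⟨⟨hm, hn⟩, hba, hsum, hodd⟩
      rcases lt_or_ge (m + n) (u-1) with h | h
      · exact Or.inl ⟨⟨by omega, by omega⟩, hba, h, hodd⟩
      · exact Or.inr ⟨⟨by omega, by omega⟩, hba, by omega, hodd⟩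
    · rintro (⟨⟨hm, hn⟩, hba, hsum, hodd⟩ | ⟨⟨hm, hn⟩, hba, hsum, hodd⟩) <;>
        exact ⟨⟨by omega, by omega⟩, hba, by omega, hodd⟩
  have hd : Disjoint (S2 (u-1)) (T2 (u-1)) := by
    simp only [Finset.disjoint_left, S2, T2, mem_filter, mem_product, mem_range]
    rintro ⟨m, n⟩ ⟨_, _, h1, _⟩ ⟨_, _, h2, _⟩
    omega
  rw [hset, card_union_of_disjoint hd]

lemma T2_odd (v : ℕ) : (T2 (2*v+1)).card = (T2 v).card := by
  have hset : T2 (2*v+1) = (T2 v).image (fun p => (2*p.1+1, 2*p.2)) := by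
    ext ⟨m, n⟩
    simp only [T2, mem_image, mem_filter, mem_product, mem_range]
    constructor
    · rintro ⟨⟨hm, hn⟩, hba, hsum, hodd⟩
      rw [dvd_iff_mod] at hodd
      obtain ⟨a, rfl | rfl⟩ := Nat.even_or_odd' m <;>
        obtain ⟨b, rfl | rfl⟩ := Nat.even_or_odd' n
      · omega
      · exfalso; rw [mod2_eo a b] at hodd; omega
      · refine ⟨(a, b), ⟨⟨by omega, by omega⟩, by omega, by omega, ?_⟩, rfl⟩
        rw [dvd_iff_mod, ← mod2_oe]; exact hodd
      · omega
    · rintro ⟨⟨a, b⟩, ⟨⟨ha, hb⟩, hba, hsum, hodd⟩, heq⟩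
      rw [dvd_iff_mod] at hodd
      obtain ⟨rfl, rfl⟩ := Prod.mk.injEq .. ▸ heq
      exact ⟨⟨by omega, by omega⟩, by omega, by omega,
        by rw [dvd_iff_mod, mod2_oe]; exact hodd⟩
  rw [hset, card_image_of_injective _ inj10]


lemma N2_eq (u : ℕ) : N2 u = (S2 u).card := by
  rw [N2, ← Set.ncard_coe_finset]
  congr 1
  ext ⟨m, n⟩
  simp only [S2, coe_filter, mem_product, mem_range, Set.mem_setOf_eq]
  constructor
  · rintro ⟨h1, h2, h3⟩; exact ⟨⟨by omega, by omega⟩, h1, h2, h3⟩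
  · rintro ⟨_, h⟩; exact h

lemma phi2_eq (v : ℕ) : phi2 (v : ℤ) = (T2 v).card := by
  rw [phi2, ← Set.ncard_coe_finset]
  congr 1
  ext ⟨m, n⟩
  simp only [T2, coe_filter, mem_product, mem_range, Set.mem_setOf_eq]
  constructor
  · rintro ⟨h1, h2, h3⟩
    have hv : m + n = v := by exact_mod_cast h2
    exact ⟨⟨by omega, by omega⟩, h1, hv, h3⟩
  · rintro ⟨_, h1, h2, h3⟩
    exact ⟨h1, by exact_mod_cast congrArg (Nat.cast : ℕ → ℤ) h2, h3⟩

lemma T2_pow (u k : ℕ) (hu : 0 < u) : (T2 (2^k * u - 1)).card = (T2 (u-1)).card := by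
  induction k with
  | zero => simp
  | succ k ih =>
    have h1 : (1:ℕ) ≤ 2^k * u := Nat.one_le_iff_ne_zero.mpr (by positivity)
    have h2 : 2^(k+1) * u = 2 * (2^k * u) := by rw [pow_succ]; ring
    have h3 : 2^(k+1) * u - 1 = 2 * (2^k * u - 1) + 1 := by omega
    rw [h3, T2_odd, ih]

lemma key_rec (u : ℕ) (hu : 0 < u) :
    ((S2 (2*u)).card : ℤ) = 3 * (S2 u).card - (T2 (u-1)).card := by
  have h1 := S2_double u
  have h2 := S2_succ u hu
  have h3 : (T2 (u-1)).card ≤ (S2 u).card := by omega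
  omega

theorem N2_pow_mul (u : ℕ) (hu : 0 < u) (k : ℕ) :
    (N2 (2 ^ k * u) : ℤ) = 3 ^ k * N2 u - ((3 ^ k - 1) / 2) * phi2 ((u : ℤ) - 1) := by
  have hphi : phi2 ((u : ℤ) - 1) = (T2 (u-1)).card := by
    have : ((u : ℤ) - 1) = ((u - 1 : ℕ) : ℤ) := by push_cast [hu]; omega
    rw [this, phi2_eq]
  induction k with
  | zero => simp [N2_eq]
  | succ k ih =>
    obtain ⟨c, hc⟩ : (2:ℤ) ∣ 3^k - 1 := by
      have := sub_dvd_pow_sub_pow (3:ℤ) 1 k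
      simpa using this
    have hck : ((3:ℤ)^k - 1)/2 = c := by rw [hc]; exact Int.mul_ediv_cancel_left c two_ne_zero
    have hck1 : ((3:ℤ)^(k+1) - 1)/2 = 3*c + 1 := by
      have : (3:ℤ)^(k+1) - 1 = 2 * (3*c + 1) := by rw [pow_succ]; nlinarith [hc]
      rw [this]; exact Int.mul_ediv_cancel_left _ two_ne_zero
    have hpos : 0 < 2^k * u := by positivity
    have hsplit : 2^(k+1) * u = 2 * (2^k * u) := by rw [pow_succ]; ring
    rw [hsplit, N2_eq, key_rec _ hpos, ← N2_eq]
    have hT : ((T2 (2^k * u - 1)).card : ℤ) = (T2 (u-1)).card := by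
      exact_mod_cast T2_pow u k hu
    rw [hT, ih, hphi, hck, hck1]
    ring
end

section
/- Let θ_p = log(p(p+1)/2)/log p, N_p(u) = #{(m,n): m ≥ n ≥ 0, p ∤ C(m,n), m+n < u}, φ_p as above, and c_p(u) = N_p(u)/u^{θ_p}. Then for every positive integer u, lim_{k→∞} c_p(p^k u) = c_p(u) − φ_p(u−1)/(2 u^{θ_p}). -/
open Filter

/-- `N_p(u)`: number of `(m,n)` with `m ≥ n ≥ 0`, `p ∤ C(m,n)` and `m + n < u`. -/
noncomputable def Npas (p : ℕ) (u : ℕ) : ℕ :=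
  {mn : ℕ × ℕ | mn.2 ≤ mn.1 ∧ mn.1 + mn.2 < u ∧ ¬ p ∣ Nat.choose mn.1 mn.2}.ncard

/-- `θ_p = log(p(p+1)/2)/log p`. -/
noncomputable def theta (p : ℕ) : ℝ := Real.log (p * (p + 1) / 2) / Real.log p

/-- `c_p(u) = N_p(u)/u^{θ_p}`. -/
noncomputable def cpas (p : ℕ) (u : ℕ) : ℝ := (Npas p u : ℝ) / (u : ℝ) ^ theta p

/-!
Write `N(v)` for the number of entries of Pascal's triangle not divisible by `p` with `m + n < v`,
and `G(q)` for those with `m + n = q`. Splitting off the last base-`p` digits `(s, t)` of `(m, n)`,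
Lucas's theorem gives `N(p v) = A N(v) + B N(v - 1)` and `G(p q + p - 1) = C G(q)`, where `A`, `B`,
`C` count the digit pairs `t ≤ s < p` with `s + t < p`, with `s + t ≥ p` (a carry), and with
`s + t = p - 1`. The reflection `(s, t) ↦ (p - 1 - t, p - 1 - s)` shows `A = B + C`, and
`A + B = p (p + 1) / 2 = p ^ θ`. Together these make `N(v) + N(v - 1)` exactly multiplicative:
it is multiplied by `p ^ θ` when `v` is multiplied by `p`. Hence
`2 N(p^k u) = p^(θ k) (N(u) + N(u - 1)) + C^k G(u - 1)`, and since `C < p ^ θ` the last term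
disappears after division by `(p^k u)^θ`, leaving `(N(u) + N(u - 1)) / (2 u^θ)`.
-/

open Finset

namespace PascalModP

variable {p : ℕ}

-- No constraint `n ≤ m` is needed: for `n > m` the binomial coefficient is `0`, divisible by `p`.
def pascalBelow (p u : ℕ) : Finset (ℕ × ℕ) :=
  (range u ×ˢ range u).filter fun mn => mn.1 + mn.2 < u ∧ ¬ p ∣ mn.1.choose mn.2

def pascalDiag (p q : ℕ) : Finset (ℕ × ℕ) :=
  (antidiagonal q).filter fun mn => ¬ p ∣ mn.1.choose mn.2

def digitPairs (p : ℕ) : Finset (ℕ × ℕ) :=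
  (range p ×ˢ range p).filter fun st => st.2 ≤ st.1

def noCarryPairs (p : ℕ) : Finset (ℕ × ℕ) := (digitPairs p).filter fun st => st.1 + st.2 < p

def carryPairs (p : ℕ) : Finset (ℕ × ℕ) := (digitPairs p).filter fun st => ¬ st.1 + st.2 < p

def topDiagPairs (p : ℕ) : Finset (ℕ × ℕ) :=
  (digitPairs p).filter fun st => st.1 + st.2 = p - 1

lemma mem_pascalBelow {u : ℕ} {mn : ℕ × ℕ} :
    mn ∈ pascalBelow p u ↔ mn.1 + mn.2 < u ∧ ¬ p ∣ mn.1.choose mn.2 := by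
  simp only [pascalBelow, mem_filter, mem_product, mem_range]
  exact ⟨And.right, fun h => ⟨⟨by omega, by omega⟩, h⟩⟩

lemma mem_pascalDiag {q : ℕ} {mn : ℕ × ℕ} :
    mn ∈ pascalDiag p q ↔ mn.1 + mn.2 = q ∧ ¬ p ∣ mn.1.choose mn.2 := by
  rw [pascalDiag, mem_filter, HasAntidiagonal.mem_antidiagonal]

lemma mem_digitPairs {st : ℕ × ℕ} :
    st ∈ digitPairs p ↔ st.1 < p ∧ st.2 < p ∧ st.2 ≤ st.1 := by
  simp only [digitPairs, mem_filter, mem_product, mem_range, and_assoc]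

lemma le_of_not_dvd_choose {m n : ℕ} (h : ¬ p ∣ m.choose n) : n ≤ m := by
  contrapose! h
  rw [Nat.choose_eq_zero_of_lt h]
  exact dvd_zero p

lemma Npas_eq_card (u : ℕ) : Npas p u = #(pascalBelow p u) := by
  rw [Npas, ← Set.ncard_coe_finset]
  congr 1
  ext mn
  rw [Set.mem_ofPred_eq, mem_coe, mem_pascalBelow]
  exact ⟨And.right, fun h => ⟨le_of_not_dvd_choose h.2, h⟩⟩

lemma phi_natCast_eq_card (q : ℕ) : phi p q = #(pascalDiag p q) := by
  rw [phi, ← Set.ncard_coe_finset]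
  congr 1
  ext mn
  rw [Set.mem_ofPred_eq, mem_coe, mem_pascalDiag]
  norm_cast
  exact ⟨And.right, fun h => ⟨le_of_not_dvd_choose h.2, h⟩⟩

lemma card_pascalBelow_succ (u : ℕ) :
    #(pascalBelow p (u + 1)) = #(pascalBelow p u) + #(pascalDiag p u) := by
  rw [← card_union_of_disjoint]
  · congr 1
    ext mn
    simp only [mem_union, mem_pascalBelow, mem_pascalDiag]
    omega
  · refine disjoint_left.mpr fun mn hlt heq => ?_
    rw [mem_pascalBelow] at hlt
    rw [mem_pascalDiag] at heq
    omega

lemma card_pascalBelow_of_pos {u : ℕ} (hu : 0 < u) :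
    #(pascalBelow p u) = #(pascalBelow p (u - 1)) + #(pascalDiag p (u - 1)) := by
  rw [← card_pascalBelow_succ, Nat.sub_add_cancel hu]

/-- Lucas's theorem for the last base-`p` digit. -/
lemma not_dvd_choose_iff (hp : p.Prime) (m n : ℕ) :
    ¬ p ∣ m.choose n ↔ n % p ≤ m % p ∧ ¬ p ∣ (m / p).choose (n / p) := by
  have : Fact p.Prime := ⟨hp⟩
  rw [(Choose.choose_modEq_choose_mod_mul_choose_div_nat (n := m) (k := n)).dvd_iff dvd_rfl,
    hp.dvd_mul, not_or]
  refine and_congr_left fun _ => ⟨fun h => ?_, fun h => ?_⟩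
  · by_contra! hlt
    exact h (by rw [Nat.choose_eq_zero_of_lt hlt]; exact dvd_zero p)
  · exact (Nat.Prime.coprime_iff_not_dvd hp).mp (hp.coprime_choose_of_lt (Nat.mod_lt _ hp.pos) h)

lemma mul_add_lt_mul_iff (hp : 0 < p) {x y v : ℕ} : p * x + y < p * v ↔ x + y / p < v := by
  rw [← Nat.mul_add_div hp, Nat.div_lt_iff_lt_mul hp, mul_comm v]

lemma mul_add_eq_mul_add_pred_iff {x y q : ℕ} (hy : y + 1 < 2 * p) :
    p * x + y = p * q + (p - 1) ↔ x = q ∧ y = p - 1 := by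
  refine ⟨fun h => ?_, fun ⟨hx, hy⟩ => by rw [hx, hy]⟩
  rcases lt_trichotomy x q with hlt | rfl | hgt
  · have := Nat.mul_le_mul_left p hlt
    rw [Nat.mul_succ] at this
    omega
  · omega
  · have := Nat.mul_le_mul_left p hgt
    rw [Nat.mul_succ] at this
    omega

lemma add_eq_mul_div_add_mod (m n : ℕ) : m + n = p * (m / p + n / p) + (m % p + n % p) := by
  linarith [Nat.div_add_mod m p, Nat.div_add_mod n p]

lemma mul_sub_one_eq_mul_pred_add_pred (hp : 0 < p) {x : ℕ} (hx : 0 < x) :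
    p * x - 1 = p * (x - 1) + (p - 1) := by
  obtain ⟨y, rfl⟩ : ∃ y, x = y + 1 := ⟨x - 1, by omega⟩
  rw [Nat.add_sub_cancel, Nat.mul_succ]
  omega

lemma card_filter_mod_eq (hp : 0 < p) {S S' : Finset (ℕ × ℕ)} {s t : ℕ} (hs : s < p)
    (ht : t < p)
    (h : ∀ m n, m % p = s → n % p = t → ((m, n) ∈ S ↔ (m / p, n / p) ∈ S')) :
    #(S.filter fun mn => (mn.1 % p, mn.2 % p) = (s, t)) = #S' := by
  have mod_eq {a r : ℕ} (hr : r < p) : (p * a + r) % p = r := by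
    rw [Nat.mul_add_mod, Nat.mod_eq_of_lt hr]
  have div_eq {a r : ℕ} (hr : r < p) : (p * a + r) / p = a := by
    rw [Nat.mul_add_div hp, Nat.div_eq_of_lt hr, add_zero]
  apply card_nbij' (fun mn => (mn.1 / p, mn.2 / p)) (fun ab => (p * ab.1 + s, p * ab.2 + t))
  · rintro ⟨m, n⟩ hmn
    simp only [coe_filter, Set.mem_ofPred_eq, Prod.mk.injEq] at hmn
    exact (h m n hmn.2.1 hmn.2.2).mp hmn.1
  · rintro ⟨a, b⟩ hab
    simp only [coe_filter, Set.mem_ofPred_eq, Prod.mk.injEq, mod_eq hs, mod_eq ht, and_true]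
    rw [h _ _ (mod_eq hs) (mod_eq ht), div_eq hs, div_eq ht]
    exact hab
  · rintro ⟨m, n⟩ hmn
    simp only [coe_filter, Set.mem_ofPred_eq, Prod.mk.injEq] at hmn
    simp only [← hmn.2.1, ← hmn.2.2, Nat.div_add_mod]
  · rintro ⟨a, b⟩ -
    simp only [div_eq hs, div_eq ht]

lemma card_eq_sum_card_filter_mod (hp : 0 < p) (S : Finset (ℕ × ℕ)) :
    #S = ∑ st ∈ range p ×ˢ range p, #(S.filter fun mn => (mn.1 % p, mn.2 % p) = st) :=
  card_eq_sum_card_fiberwise fun mn _ => by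
    simp only [coe_product, coe_range, Set.mem_prod, Set.mem_Iio, Nat.mod_lt _ hp, and_self]

lemma card_pascalBelow_mul (hp : p.Prime) (v : ℕ) :
    #(pascalBelow p (p * v)) =
      #(noCarryPairs p) * #(pascalBelow p v) + #(carryPairs p) * #(pascalBelow p (v - 1)) := by
  have fiber : ∀ st ∈ range p ×ˢ range p,
      #((pascalBelow p (p * v)).filter fun mn => (mn.1 % p, mn.2 % p) = st) =
        if st.2 ≤ st.1 then #(pascalBelow p (v - (st.1 + st.2) / p)) else 0 := by
    rintro ⟨s, t⟩ hst
    rw [mem_product, mem_range, mem_range] at hst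
    split_ifs with hts
    · refine card_filter_mod_eq hp.pos hst.1 hst.2 fun m n hm hn => ?_
      rw [mem_pascalBelow, mem_pascalBelow, not_dvd_choose_iff hp, add_eq_mul_div_add_mod, hm, hn,
        mul_add_lt_mul_iff hp.pos, Nat.lt_sub_iff_add_lt]
      simp only [hts, true_and]
    · refine (card_filter_mod_eq (S' := ∅) hp.pos hst.1 hst.2 fun m n hm hn => ?_).trans
        card_empty
      rw [mem_pascalBelow, not_dvd_choose_iff hp, hm, hn]
      simp only [hts, false_and, and_false, notMem_empty]
  rw [card_eq_sum_card_filter_mod hp.pos, sum_congr rfl fiber, ← sum_filter]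
  change ∑ st ∈ digitPairs p, _ = _
  rw [← sum_filter_add_sum_filter_not _ fun st => st.1 + st.2 < p]
  change ∑ st ∈ noCarryPairs p, _ + ∑ st ∈ carryPairs p, _ = _
  have no_carry : ∀ st ∈ noCarryPairs p,
      #(pascalBelow p (v - (st.1 + st.2) / p)) = #(pascalBelow p v) := by
    intro st hst
    simp only [noCarryPairs, mem_filter] at hst
    rw [Nat.div_eq_of_lt hst.2, Nat.sub_zero]
  have carry : ∀ st ∈ carryPairs p,
      #(pascalBelow p (v - (st.1 + st.2) / p)) = #(pascalBelow p (v - 1)) := by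
    intro st hst
    simp only [carryPairs, mem_filter, mem_digitPairs] at hst
    rw [Nat.div_eq_of_lt_le (k := 1) (by omega) (by omega)]
  rw [sum_congr rfl no_carry, sum_congr rfl carry, sum_const, sum_const, smul_eq_mul, smul_eq_mul]

lemma card_pascalDiag_mul_add_pred (hp : p.Prime) (q : ℕ) :
    #(pascalDiag p (p * q + (p - 1))) = #(topDiagPairs p) * #(pascalDiag p q) := by
  have fiber : ∀ st ∈ range p ×ˢ range p,
      #((pascalDiag p (p * q + (p - 1))).filter fun mn => (mn.1 % p, mn.2 % p) = st) =
        if st.2 ≤ st.1 ∧ st.1 + st.2 = p - 1 then #(pascalDiag p q) else 0 := by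
    rintro ⟨s, t⟩ hst
    rw [mem_product, mem_range, mem_range] at hst
    have mem_iff {m n : ℕ} (hm : m % p = s) (hn : n % p = t) :
        (m, n) ∈ pascalDiag p (p * q + (p - 1)) ↔
          (t ≤ s ∧ s + t = p - 1) ∧ (m / p, n / p) ∈ pascalDiag p q := by
      rw [mem_pascalDiag, mem_pascalDiag, not_dvd_choose_iff hp, add_eq_mul_div_add_mod, hm, hn,
        mul_add_eq_mul_add_pred_iff (by omega)]
      tauto
    split_ifs with hc
    · exact card_filter_mod_eq hp.pos hst.1 hst.2 fun m n hm hn => by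
        simp only [mem_iff hm hn, hc, true_and]
    · refine (card_filter_mod_eq (S' := ∅) hp.pos hst.1 hst.2 fun m n hm hn => ?_).trans
        card_empty
      simp only [mem_iff hm hn, hc, false_and, notMem_empty]
  rw [card_eq_sum_card_filter_mod hp.pos, sum_congr rfl fiber, ← sum_filter, sum_const,
    smul_eq_mul, topDiagPairs, digitPairs, filter_filter]

lemma card_digitPairs_eq_add : #(digitPairs p) = #(noCarryPairs p) + #(carryPairs p) :=
  (card_filter_add_card_filter_not _).symm

/-- The reflection `(s, t) ↦ (p - 1 - t, p - 1 - s)` exchanges carry-free pairs below the top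
diagonal `s + t = p - 1` with pairs that carry. -/
lemma card_noCarryPairs : #(noCarryPairs p) = #(carryPairs p) + #(topDiagPairs p) := by
  rw [← card_filter_add_card_filter_not (s := noCarryPairs p)
    (fun st : ℕ × ℕ => st.1 + st.2 = p - 1), add_comm]
  congr 1
  · apply card_nbij' (fun st => (p - 1 - st.2, p - 1 - st.1))
      (fun st => (p - 1 - st.2, p - 1 - st.1)) <;>
    · rintro ⟨s, t⟩ h
      simp only [noCarryPairs, carryPairs, coe_filter, mem_filter, mem_digitPairs,
        Set.mem_ofPred_eq, Prod.mk.injEq] at h ⊢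
      omega
  · rw [noCarryPairs, topDiagPairs, filter_filter]
    congr 1
    apply filter_congr
    intro st hst
    rw [mem_digitPairs] at hst
    omega

lemma two_mul_card_digitPairs : 2 * #(digitPairs p) = p * (p + 1) := by
  have fiber : ∀ s ∈ range p, #((digitPairs p).filter fun st => st.1 = s) = s + 1 := by
    intro s hs
    rw [mem_range] at hs
    suffices h : (digitPairs p).filter (fun st => st.1 = s) =
        (range (s + 1)).map ⟨(s, ·), Prod.mk_right_injective s⟩ by
      rw [h, card_map, card_range]
    ext ⟨a, b⟩
    simp only [mem_filter, mem_digitPairs, Finset.mem_map, mem_range, Function.Embedding.coeFn_mk,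
      Prod.mk.injEq]
    constructor
    · rintro ⟨⟨-, -, hba⟩, rfl⟩
      exact ⟨b, by omega, rfl, rfl⟩
    · rintro ⟨c, hc, rfl, rfl⟩
      omega
  have gauss := sum_range_id_mul_two (p + 1)
  rw [sum_range_succ', add_zero, Nat.add_sub_cancel] at gauss
  rw [card_eq_sum_card_fiberwise (f := Prod.fst) (t := range p) fun st hst => by
      simp only [mem_coe, mem_digitPairs] at hst; exact mem_range.mpr hst.1,
    sum_congr rfl fiber]
  linarith

lemma card_digitPairs_pos (hp : 0 < p) : 0 < #(digitPairs p) :=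
  card_pos.mpr ⟨(0, 0), mem_digitPairs.mpr ⟨hp, hp, le_rfl⟩⟩

lemma card_topDiagPairs_lt (hp : 2 ≤ p) : #(topDiagPairs p) < #(digitPairs p) := by
  have : (carryPairs p).Nonempty := ⟨(p - 1, 1), by
    simp only [carryPairs, mem_filter, mem_digitPairs]; omega⟩
  have := this.card_pos
  rw [card_digitPairs_eq_add, card_noCarryPairs]
  omega

lemma card_pascalBelow_mul_add_pred (hp : p.Prime) {v : ℕ} (hv : 0 < v) :
    #(pascalBelow p (p * v)) + #(pascalBelow p (p * v - 1)) =
      #(digitPairs p) * (#(pascalBelow p v) + #(pascalBelow p (v - 1))) := by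
  have h1 := card_pascalBelow_mul hp v
  have h2 := card_pascalBelow_of_pos (p := p) (Nat.mul_pos hp.pos hv)
  have h3 := card_pascalDiag_mul_add_pred hp (v - 1)
  have h4 := card_pascalBelow_of_pos (p := p) hv
  have h5 := card_digitPairs_eq_add (p := p)
  have h6 := card_noCarryPairs (p := p)
  rw [mul_sub_one_eq_mul_pred_add_pred hp.pos hv] at h2 ⊢
  zify at *
  linear_combination 2 * h1 - h2 - h3 - (#(pascalBelow p v) + #(pascalBelow p (v - 1)) : ℤ) * h5
    + ((#(noCarryPairs p) : ℤ) - #(carryPairs p)) * h4 + (#(pascalDiag p (v - 1)) : ℤ) * h6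

lemma card_pascalBelow_pow_mul_add_pred (hp : p.Prime) {u : ℕ} (hu : 0 < u) (k : ℕ) :
    #(pascalBelow p (p ^ k * u)) + #(pascalBelow p (p ^ k * u - 1)) =
      #(digitPairs p) ^ k * (#(pascalBelow p u) + #(pascalBelow p (u - 1))) := by
  induction k with
  | zero => simp
  | succ k ih =>
    rw [pow_succ', mul_assoc,
      card_pascalBelow_mul_add_pred hp (Nat.mul_pos (pow_pos hp.pos k) hu), ih, pow_succ',
      mul_assoc]

lemma card_pascalDiag_pow_mul_sub_one (hp : p.Prime) {u : ℕ} (hu : 0 < u) (k : ℕ) :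
    #(pascalDiag p (p ^ k * u - 1)) = #(topDiagPairs p) ^ k * #(pascalDiag p (u - 1)) := by
  induction k with
  | zero => simp
  | succ k ih =>
    rw [pow_succ', mul_assoc,
      mul_sub_one_eq_mul_pred_add_pred hp.pos (Nat.mul_pos (pow_pos hp.pos k) hu),
      card_pascalDiag_mul_add_pred hp, ih, pow_succ', mul_assoc]

lemma two_mul_card_pascalBelow_pow_mul (hp : p.Prime) {u : ℕ} (hu : 0 < u) (k : ℕ) :
    2 * #(pascalBelow p (p ^ k * u)) =
      #(digitPairs p) ^ k * (#(pascalBelow p u) + #(pascalBelow p (u - 1))) +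
        #(topDiagPairs p) ^ k * #(pascalDiag p (u - 1)) := by
  have := card_pascalBelow_of_pos (p := p) (Nat.mul_pos (pow_pos hp.pos k) hu)
  rw [← card_pascalBelow_pow_mul_add_pred hp hu k, ← card_pascalDiag_pow_mul_sub_one hp hu k]
  omega

lemma rpow_theta (hp : p.Prime) : (p : ℝ) ^ theta p = #(digitPairs p) := by
  have hp0 : (0 : ℝ) < p := by exact_mod_cast hp.pos
  have hlog : Real.log p ≠ 0 :=
    Real.log_ne_zero_of_pos_of_ne_one hp0 (by exact_mod_cast hp.ne_one)
  have hcard : ((#(digitPairs p) : ℕ) : ℝ) = p * (p + 1) / 2 := by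
    rw [eq_div_iff two_ne_zero, mul_comm]
    exact_mod_cast two_mul_card_digitPairs
  rw [theta, Real.rpow_def_of_pos hp0, mul_div_cancel₀ _ hlog, Real.exp_log (by positivity),
    hcard]

lemma natCast_pow_mul_rpow_theta (hp : p.Prime) (k u : ℕ) :
    ((p ^ k * u : ℕ) : ℝ) ^ theta p = (#(digitPairs p) : ℝ) ^ k * (u : ℝ) ^ theta p := by
  push_cast
  rw [Real.mul_rpow (by positivity) (by positivity), ← Real.rpow_pow_comm (Nat.cast_nonneg p),
    rpow_theta hp]

lemma cpas_pow_mul (hp : p.Prime) {u : ℕ} (hu : 0 < u) (k : ℕ) :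
    cpas p (p ^ k * u) =
      (#(pascalBelow p u) + #(pascalBelow p (u - 1)) : ℝ) / (2 * (u : ℝ) ^ theta p) +
        ((#(topDiagPairs p) : ℝ) / #(digitPairs p)) ^ k *
          (#(pascalDiag p (u - 1)) / (2 * (u : ℝ) ^ theta p)) := by
  have hT : (0 : ℝ) < #(digitPairs p) := by exact_mod_cast card_digitPairs_pos hp.pos
  have hX : (0 : ℝ) < (u : ℝ) ^ theta p := by positivity
  have h : (2 * #(pascalBelow p (p ^ k * u)) : ℝ) =
      (#(digitPairs p) : ℝ) ^ k * (#(pascalBelow p u) + #(pascalBelow p (u - 1))) +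
        (#(topDiagPairs p) : ℝ) ^ k * #(pascalDiag p (u - 1)) := by
    exact_mod_cast two_mul_card_pascalBelow_pow_mul hp hu k
  rw [cpas, Npas_eq_card, natCast_pow_mul_rpow_theta hp, div_pow]
  field_simp
  linear_combination h

lemma cpas_sub_phi {u : ℕ} (hu : 0 < u) :
    cpas p u - (phi p ((u : ℤ) - 1) : ℝ) / (2 * (u : ℝ) ^ theta p) =
      (#(pascalBelow p u) + #(pascalBelow p (u - 1)) : ℝ) / (2 * (u : ℝ) ^ theta p) := by
  have h := card_pascalBelow_of_pos (p := p) hu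
  have hX : (0 : ℝ) < (u : ℝ) ^ theta p := by positivity
  rw [cpas, Npas_eq_card, show (u : ℤ) - 1 = ((u - 1 : ℕ) : ℤ) by omega, phi_natCast_eq_card]
  field_simp
  rw [h]
  push_cast
  ring

end PascalModP

open PascalModP in
theorem cpas_tendsto (p : ℕ) (hp : p.Prime) (u : ℕ) (hu : 0 < u) :
    Tendsto (fun k : ℕ => cpas p (p ^ k * u)) atTop
      (nhds (cpas p u - (phi p ((u : ℤ) - 1) : ℝ) / (2 * (u : ℝ) ^ theta p))) := by
  have hratio : (#(topDiagPairs p) : ℝ) / #(digitPairs p) < 1 := by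
    rw [div_lt_one (by exact_mod_cast card_digitPairs_pos hp.pos)]
    exact_mod_cast card_topDiagPairs_lt hp.two_le
  have hgeom := tendsto_pow_atTop_nhds_zero_of_lt_one (by positivity) hratio
  simp_rw [cpas_pow_mul hp hu, cpas_sub_phi hu]
  simpa using tendsto_const_nhds.add (hgeom.mul_const _)
end

section
/- With notation as above, lim_{k→∞} c_p(p^k) = 1/2 and lim_{k→∞} c_p(2 p^k) = 3/2^{θ_p + 1}. -/
/-!
By Lucas's theorem, `p ∤ C(m, n)` exactly when every base-`p` digit of `n` is at most the
corresponding digit of `m`. Hence the pairs `m, n < p ^ k` with `p ∤ C(m, n)` are the `k`-fold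
products of the `Q = p (p + 1) / 2` admissible digit pairs, and there are `Q ^ k = (p ^ k) ^ θ_p`
of them. The reflection `(m, n) ↦ (p ^ k - 1 - n, p ^ k - 1 - m)` preserves these pairs and sends
`m + n` to `2 (p ^ k - 1) - (m + n)`, so `2 N_p(p ^ k) = Q ^ k + E_k`, where `E_k ≤ p ^ k` counts
the pairs on the antidiagonal `m + n = p ^ k - 1`. Splitting off the top digit of `m` gives
`N_p(2 p ^ k) = Q ^ k + N_p(p ^ k)`. Since `p < Q`, `E_k / Q ^ k → 0`, and both limits follow.
-/

open Filter

open Finset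

namespace Nat

variable {p : ℕ}

theorem Prime.choose_pow_mul_add_modEq (hp : p.Prime) {k x y : ℕ} (a b : ℕ)
    (hx : x < p ^ k) (hy : y < p ^ k) :
    choose (p ^ k * a + x) (p ^ k * b + y) ≡ choose a b * choose x y [MOD p] := by
  have : Fact p.Prime := ⟨hp⟩
  have hdigit : ∀ c z, ∀ i ∈ range k, (p ^ k * c + z) / p ^ i % p = z / p ^ i % p := by
    intro c z i hi
    obtain ⟨j, rfl⟩ := Nat.exists_eq_add_of_lt (mem_range.1 hi)
    rw [show p ^ (i + j + 1) * c + z = z + p ^ i * (p * (p ^ j * c)) by ring,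
      Nat.add_mul_div_left _ _ (pow_pos hp.pos i), Nat.add_mul_mod_self_left]
  have hlow := Choose.choose_modEq_prod_range_choose_nat (p := p) hx hy
  have hsplit := Choose.choose_modEq_choose_mul_prod_range_choose (p := p)
    (n := p ^ k * a + x) (k := p ^ k * b + y) k
  rw [← Int.natCast_modEq_iff] at hlow ⊢
  push_cast at hlow hsplit ⊢
  rw [Nat.mul_add_div (pow_pos hp.pos k), Nat.mul_add_div (pow_pos hp.pos k),
    Nat.div_eq_of_lt hx, Nat.div_eq_of_lt hy, add_zero, add_zero,
    prod_congr rfl fun i hi => by rw [hdigit a x i hi, hdigit b y i hi]] at hsplit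
  exact hsplit.trans (hlow.mul_left _).symm

theorem Prime.not_dvd_choose_pow_mul_add_iff (hp : p.Prime) {k x y : ℕ} (a b : ℕ)
    (hx : x < p ^ k) (hy : y < p ^ k) :
    ¬ p ∣ choose (p ^ k * a + x) (p ^ k * b + y) ↔
      ¬ p ∣ choose a b ∧ ¬ p ∣ choose x y := by
  rw [(hp.choose_pow_mul_add_modEq a b hx hy).dvd_iff dvd_rfl, hp.dvd_mul, not_or]

theorem Prime.not_dvd_choose_iff_le (hp : p.Prime) {x y : ℕ} (hx : x < p) :
    ¬ p ∣ choose x y ↔ y ≤ x := by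
  refine ⟨fun h => ?_, fun h => (hp.coprime_iff_not_dvd).1 (hp.coprime_choose_of_lt hx h)⟩
  by_contra hxy
  exact h (by rw [choose_eq_zero_of_lt (not_le.1 hxy)]; exact dvd_zero p)

end Nat

def lucasPairs (p k : ℕ) : Finset (ℕ × ℕ) :=
  (range (p ^ k) ×ˢ range (p ^ k)).filter fun mn => ¬ p ∣ mn.1.choose mn.2

section

variable {p k : ℕ}

theorem mem_lucasPairs {mn : ℕ × ℕ} :
    mn ∈ lucasPairs p k ↔ mn.1 < p ^ k ∧ mn.2 < p ^ k ∧ ¬ p ∣ mn.1.choose mn.2 := by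
  simp [lucasPairs, and_assoc]

theorem mem_lucasPairs_one (hp : p.Prime) {x y : ℕ} :
    (x, y) ∈ lucasPairs p 1 ↔ x < p ∧ y ≤ x := by
  rw [mem_lucasPairs, pow_one]
  constructor
  · rintro ⟨hx, -, h⟩
    exact ⟨hx, (hp.not_dvd_choose_iff_le hx).1 h⟩
  · rintro ⟨hx, hyx⟩
    exact ⟨hx, hyx.trans_lt hx, (hp.not_dvd_choose_iff_le hx).2 hyx⟩

theorem snd_le_fst_of_mem_lucasPairs {mn : ℕ × ℕ} (h : mn ∈ lucasPairs p k) :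
    mn.2 ≤ mn.1 := by
  by_contra hlt
  apply (mem_lucasPairs.1 h).2.2
  rw [Nat.choose_eq_zero_of_lt (not_le.1 hlt)]
  exact dvd_zero p

theorem pow_mul_add_mem_lucasPairs_succ_iff (hp : p.Prime) {a b x y : ℕ}
    (hx : x < p ^ k) (hy : y < p ^ k) :
    (p ^ k * a + x, p ^ k * b + y) ∈ lucasPairs p (k + 1) ↔
      (a, b) ∈ lucasPairs p 1 ∧ (x, y) ∈ lucasPairs p k := by
  have hpk := pow_pos hp.pos k
  have hlt : ∀ c z, z < p ^ k → (p ^ k * c + z < p ^ (k + 1) ↔ c < p ^ 1) := fun c z hz => by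
    rw [pow_one, pow_succ', ← Nat.div_lt_iff_lt_mul hpk, Nat.mul_add_div hpk,
      Nat.div_eq_of_lt hz, add_zero]
  simp only [mem_lucasPairs, hlt a x hx, hlt b y hy,
    hp.not_dvd_choose_pow_mul_add_iff a b hx hy]
  tauto

theorem card_filter_lucasPairs_succ (hp : p.Prime) (P : ℕ × ℕ → Prop) [DecidablePred P] :
    #((lucasPairs p (k + 1)).filter P) = ∑ ab ∈ lucasPairs p 1,
      #((lucasPairs p k).filter fun xy => P (p ^ k * ab.1 + xy.1, p ^ k * ab.2 + xy.2)) := by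
  have hpk := pow_pos hp.pos k
  let glue : (ℕ × ℕ) × (ℕ × ℕ) → ℕ × ℕ := fun z =>
    (p ^ k * z.1.1 + z.2.1, p ^ k * z.1.2 + z.2.2)
  let split : ℕ × ℕ → (ℕ × ℕ) × (ℕ × ℕ) := fun mn =>
    ((mn.1 / p ^ k, mn.2 / p ^ k), (mn.1 % p ^ k, mn.2 % p ^ k))
  have glue_split : ∀ mn, glue (split mn) = mn := fun mn => by
    simp only [glue, split, Nat.div_add_mod]
  calc #((lucasPairs p (k + 1)).filter P)
      = #((lucasPairs p 1 ×ˢ lucasPairs p k).filter (P ∘ glue)) := by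
        refine card_nbij' split glue ?_ ?_ (fun mn _ => glue_split mn) ?_
        · intro mn hmn
          obtain ⟨hL, hP⟩ := mem_filter.1 hmn
          rw [← glue_split mn, pow_mul_add_mem_lucasPairs_succ_iff hp (Nat.mod_lt _ hpk)
            (Nat.mod_lt _ hpk)] at hL
          exact mem_filter.2 ⟨mem_product.2 hL, by simpa only [Function.comp, glue_split]⟩
        · rintro ⟨ab, xy⟩ hz
          obtain ⟨hL, hP⟩ := mem_filter.1 hz
          have hxy := mem_lucasPairs.1 (mem_product.1 hL).2
          refine mem_filter.2 ⟨?_, hP⟩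
          exact (pow_mul_add_mem_lucasPairs_succ_iff hp hxy.1 hxy.2.1).2 (mem_product.1 hL)
        · rintro ⟨ab, xy⟩ hz
          have hxy := mem_lucasPairs.1 (mem_product.1 (mem_filter.1 hz).1).2
          simp only [glue, split, Nat.mul_add_div hpk, Nat.mul_add_mod, Nat.div_eq_of_lt hxy.1,
            Nat.div_eq_of_lt hxy.2.1, Nat.mod_eq_of_lt hxy.1, Nat.mod_eq_of_lt hxy.2.1, add_zero]
    _ = _ := by
        rw [card_filter, sum_product]
        simp only [card_filter, Function.comp, glue]

theorem card_lucasPairs (hp : p.Prime) (k : ℕ) :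
    #(lucasPairs p k) = #(lucasPairs p 1) ^ k := by
  induction k with
  | zero => simp [lucasPairs, filter_singleton, hp.ne_one]
  | succ k ih =>
    have h := card_filter_lucasPairs_succ (k := k) hp fun _ => True
    simp only [filter_true_of_mem fun _ _ => trivial, sum_const, smul_eq_mul] at h
    rw [h, ih, pow_succ, mul_comm]

theorem two_mul_card_lucasPairs_one (hp : p.Prime) : 2 * #(lucasPairs p 1) = p * (p + 1) := by
  have hL : lucasPairs p 1 = (range p ×ˢ range p).filter fun xy => xy.2 ≤ xy.1 := by
    ext ⟨x, y⟩
    simp only [mem_lucasPairs_one hp, mem_filter, mem_product, mem_range]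
    omega
  have hrow : ∀ x ∈ range p, #((range p).filter fun y => y ≤ x) = x + 1 := by
    intro x hx
    rw [← card_range (x + 1)]
    congr 1
    ext y
    simp only [mem_filter, mem_range] at hx ⊢
    omega
  have hgauss := sum_range_id_mul_two (p + 1)
  rw [sum_range_succ', add_zero, Nat.add_sub_cancel] at hgauss
  rw [hL, card_filter, sum_product]
  simp only [← card_filter, sum_congr rfl hrow]
  linarith

theorem Npas_eq_card_filter_lucasPairs {u : ℕ} (hu : u ≤ p ^ k) :
    Npas p u = #((lucasPairs p k).filter fun mn => mn.1 + mn.2 < u) := by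
  rw [Npas, ← Set.ncard_coe_finset]
  congr 1
  ext mn
  simp only [Set.mem_ofPred_eq, coe_filter, mem_lucasPairs]
  constructor
  · rintro ⟨hle, hu', hdvd⟩
    exact ⟨⟨by omega, by omega, hdvd⟩, hu'⟩
  · rintro ⟨hmem, hu'⟩
    exact ⟨snd_le_fst_of_mem_lucasPairs (mem_lucasPairs.2 hmem), hu', hmem.2.2⟩

theorem reflect_mem_lucasPairs (hp : p.Prime) {m n : ℕ} (h : (m, n) ∈ lucasPairs p k) :
    (p ^ k - 1 - n, p ^ k - 1 - m) ∈ lucasPairs p k := by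
  induction k generalizing m n with
  | zero =>
    obtain ⟨hm, hn, -⟩ := mem_lucasPairs.1 h
    simp only [pow_zero, Nat.lt_one_iff] at hm hn
    subst hm hn
    exact h
  | succ k ih =>
    have hpk := pow_pos hp.pos k
    have hsplit : ∀ z, ∃ c r, r < p ^ k ∧ z = p ^ k * c + r :=
      fun z => ⟨z / p ^ k, z % p ^ k, Nat.mod_lt _ hpk, (Nat.div_add_mod z _).symm⟩
    obtain ⟨a, x, hx, rfl⟩ := hsplit m
    obtain ⟨b, y, hy, rfl⟩ := hsplit n
    rw [pow_mul_add_mem_lucasPairs_succ_iff hp hx hy, mem_lucasPairs_one hp] at h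
    obtain ⟨⟨ha, hba⟩, hxy⟩ := h
    have hreflect : ∀ c z, c < p → z < p ^ k →
        p ^ (k + 1) - 1 - (p ^ k * c + z) = p ^ k * (p - 1 - c) + (p ^ k - 1 - z) := by
      intro c z hc hz
      have : p ^ (k + 1) = p ^ k * c + p ^ k * (p - 1 - c) + p ^ k := by
        rw [pow_succ, ← Nat.mul_add, ← Nat.mul_add_one]
        congr 1
        omega
      omega
    rw [hreflect b y (by omega) hy, hreflect a x ha hx,
      pow_mul_add_mem_lucasPairs_succ_iff hp (by omega) (by omega), mem_lucasPairs_one hp]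
    exact ⟨⟨by omega, by omega⟩, ih hxy⟩

theorem card_filter_lucasPairs_sum_lt_eq_gt (hp : p.Prime) :
    #((lucasPairs p k).filter fun mn => mn.1 + mn.2 < p ^ k - 1) =
      #((lucasPairs p k).filter fun mn => p ^ k - 1 < mn.1 + mn.2) := by
  let r : ℕ × ℕ → ℕ × ℕ := fun mn => (p ^ k - 1 - mn.2, p ^ k - 1 - mn.1)
  have hr : ∀ mn ∈ lucasPairs p k, r mn ∈ lucasPairs p k ∧
      (r mn).1 + (r mn).2 = 2 * (p ^ k - 1) - (mn.1 + mn.2) ∧ r (r mn) = mn := by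
    rintro ⟨m, n⟩ h
    obtain ⟨hm, hn, -⟩ := mem_lucasPairs.1 h
    dsimp only at hm hn
    refine ⟨reflect_mem_lucasPairs hp h, by simp only [r]; omega, ?_⟩
    simp only [r]
    ext <;> omega
  refine card_nbij' r r (fun mn h => ?_) (fun mn h => ?_) (fun mn h => (hr mn ?_).2.2)
    (fun mn h => (hr mn ?_).2.2)
  · obtain ⟨hL, hlt⟩ := mem_filter.1 h
    obtain ⟨hrL, hsum, -⟩ := hr mn hL
    exact mem_filter.2 ⟨hrL, by omega⟩
  · obtain ⟨hL, hgt⟩ := mem_filter.1 h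
    obtain ⟨hrL, hsum, -⟩ := hr mn hL
    have := mem_lucasPairs.1 hL
    exact mem_filter.2 ⟨hrL, by omega⟩
  · exact (mem_filter.1 h).1
  · exact (mem_filter.1 h).1

def lucasAntidiagonal (p k : ℕ) : Finset (ℕ × ℕ) :=
  (lucasPairs p k).filter fun mn => mn.1 + mn.2 = p ^ k - 1

theorem two_mul_Npas_pow (hp : p.Prime) (k : ℕ) :
    2 * Npas p (p ^ k) = #(lucasPairs p 1) ^ k + #(lucasAntidiagonal p k) := by
  have hpk := pow_pos hp.pos k
  have htotal := card_filter_add_card_filter_not (s := lucasPairs p k)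
    (fun mn => mn.1 + mn.2 < p ^ k)
  have hbelow : #((lucasPairs p k).filter fun mn => mn.1 + mn.2 < p ^ k) =
      #((lucasPairs p k).filter fun mn => mn.1 + mn.2 < p ^ k - 1) +
        #(lucasAntidiagonal p k) := by
    rw [lucasAntidiagonal,
      ← card_union_of_disjoint (disjoint_filter.2 fun _ _ h1 h2 => by omega), ← filter_or]
    congr 1
    exact filter_congr fun _ _ => by omega
  have habove : ((lucasPairs p k).filter fun mn => ¬ mn.1 + mn.2 < p ^ k) =
      (lucasPairs p k).filter fun mn => p ^ k - 1 < mn.1 + mn.2 :=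
    filter_congr fun _ _ => by omega
  rw [Npas_eq_card_filter_lucasPairs le_rfl, ← card_lucasPairs hp k, ← htotal, habove,
    ← card_filter_lucasPairs_sum_lt_eq_gt hp, hbelow]
  ring

theorem Npas_two_mul_pow (hp : p.Prime) (k : ℕ) :
    Npas p (2 * p ^ k) = #(lucasPairs p 1) ^ k + Npas p (p ^ k) := by
  have hpk := pow_pos hp.pos k
  have hsub : ({(0, 0), (1, 0)} : Finset (ℕ × ℕ)) ⊆ lucasPairs p 1 := by
    intro ab hab
    rcases mem_insert.1 hab with rfl | hab
    · exact (mem_lucasPairs_one hp).2 ⟨hp.pos, le_rfl⟩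
    · rw [mem_singleton.1 hab]
      exact (mem_lucasPairs_one hp).2 ⟨hp.one_lt, Nat.zero_le _⟩
  have hvanish : ∀ ab ∈ lucasPairs p 1, ab ∉ ({(0, 0), (1, 0)} : Finset (ℕ × ℕ)) →
      #((lucasPairs p k).filter fun xy =>
        p ^ k * ab.1 + xy.1 + (p ^ k * ab.2 + xy.2) < 2 * p ^ k) = 0 := by
    rintro ⟨a, b⟩ hab hnot
    rw [mem_lucasPairs_one hp] at hab
    simp only [mem_insert, mem_singleton, Prod.mk.injEq, not_or] at hnot
    have hab2 : p ^ k * 2 ≤ p ^ k * a + p ^ k * b := by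
      rw [← Nat.mul_add]
      exact Nat.mul_le_mul_left _ (by omega)
    rw [card_eq_zero, filter_eq_empty_iff]
    intro xy _
    dsimp only
    omega
  have hle : 2 * p ^ k ≤ p ^ (k + 1) := by
    rw [pow_succ']
    exact Nat.mul_le_mul_right (p ^ k) hp.two_le
  rw [Npas_eq_card_filter_lucasPairs hle, card_filter_lucasPairs_succ hp,
    ← sum_subset hsub hvanish, sum_pair (by simp), ← card_lucasPairs hp k,
    Npas_eq_card_filter_lucasPairs le_rfl]
  congr 1
  · refine congrArg card (filter_true_of_mem fun xy h => ?_)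
    have := mem_lucasPairs.1 h
    omega
  · exact congrArg card (filter_congr fun _ _ => by omega)

theorem card_lucasAntidiagonal_le : #(lucasAntidiagonal p k) ≤ p ^ k := by
  calc #(lucasAntidiagonal p k)
      ≤ #(range (p ^ k)) := by
        refine card_le_card_of_injOn Prod.fst (fun mn h => ?_) fun mn h mn' h' heq => ?_
        · exact mem_range.2 (mem_lucasPairs.1 (mem_filter.1 h).1).1
        · have h1 := (mem_filter.1 h).2
          have h2 := (mem_filter.1 h').2
          exact Prod.ext heq (by omega)
    _ = p ^ k := card_range _

theorem card_lucasPairs_one_pos (hp : p.Prime) : 0 < #(lucasPairs p 1) :=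
  card_pos.2 ⟨(0, 0), (mem_lucasPairs_one hp).2 ⟨hp.pos, le_rfl⟩⟩

theorem cast_card_lucasPairs_one (hp : p.Prime) :
    (#(lucasPairs p 1) : ℝ) = p * (p + 1) / 2 := by
  have h : ((2 * #(lucasPairs p 1) : ℕ) : ℝ) = (p * (p + 1) : ℕ) := by
    rw [two_mul_card_lucasPairs_one hp]
  push_cast at h
  linarith

theorem rpow_theta_eq (hp : p.Prime) : (p : ℝ) ^ theta p = #(lucasPairs p 1) := by
  have hp1 : (1 : ℝ) < p := by exact_mod_cast hp.one_lt
  rw [theta, ← cast_card_lucasPairs_one hp, ← Real.logb, Real.rpow_logb (by linarith) hp1.ne']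
  exact_mod_cast card_lucasPairs_one_pos hp

theorem pow_rpow_theta_eq (hp : p.Prime) (k : ℕ) :
    ((p ^ k : ℕ) : ℝ) ^ theta p = (#(lucasPairs p 1) : ℝ) ^ k := by
  rw [Nat.cast_pow, ← Real.rpow_natCast_mul (Nat.cast_nonneg p), mul_comm,
    Real.rpow_mul_natCast (Nat.cast_nonneg p), rpow_theta_eq hp]

theorem tendsto_card_lucasAntidiagonal_div (hp : p.Prime) :
    Tendsto (fun k => (#(lucasAntidiagonal p k) : ℝ) / #(lucasPairs p 1) ^ k) atTop (nhds 0) := by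
  have hp2 : (2 : ℝ) ≤ p := by exact_mod_cast hp.two_le
  have hQ : (p : ℝ) < #(lucasPairs p 1) := by
    rw [cast_card_lucasPairs_one hp]
    nlinarith
  have hQpos : (0 : ℝ) < #(lucasPairs p 1) := by linarith
  refine squeeze_zero (fun k => by positivity) (fun k => ?_)
    (tendsto_pow_atTop_nhds_zero_of_lt_one (by positivity) ((div_lt_one hQpos).2 hQ))
  rw [div_pow]
  gcongr
  exact_mod_cast card_lucasAntidiagonal_le

theorem cpas_pow_eq (hp : p.Prime) (k : ℕ) :
    cpas p (p ^ k) = (1 + (#(lucasAntidiagonal p k) : ℝ) / #(lucasPairs p 1) ^ k) / 2 := by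
  have hcount : 2 * (Npas p (p ^ k) : ℝ) = #(lucasPairs p 1) ^ k + #(lucasAntidiagonal p k) := by
    exact_mod_cast two_mul_Npas_pow hp k
  have hQ : (0 : ℝ) < #(lucasPairs p 1) ^ k :=
    pow_pos (by exact_mod_cast card_lucasPairs_one_pos hp) k
  rw [cpas, pow_rpow_theta_eq hp]
  field_simp
  linarith

theorem cpas_two_mul_pow_eq (hp : p.Prime) (k : ℕ) :
    cpas p (2 * p ^ k) =
      (3 + (#(lucasAntidiagonal p k) : ℝ) / #(lucasPairs p 1) ^ k) / 2 ^ (theta p + 1) := by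
  have hcount : 2 * (Npas p (p ^ k) : ℝ) = #(lucasPairs p 1) ^ k + #(lucasAntidiagonal p k) := by
    exact_mod_cast two_mul_Npas_pow hp k
  have hcount2 : (Npas p (2 * p ^ k) : ℝ) = #(lucasPairs p 1) ^ k + Npas p (p ^ k) := by
    exact_mod_cast Npas_two_mul_pow hp k
  have hQ : (0 : ℝ) < #(lucasPairs p 1) ^ k :=
    pow_pos (by exact_mod_cast card_lucasPairs_one_pos hp) k
  have hden : ((2 * p ^ k : ℕ) : ℝ) ^ theta p = 2 ^ theta p * #(lucasPairs p 1) ^ k := by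
    rw [Nat.cast_mul, Nat.cast_ofNat, Real.mul_rpow zero_le_two (Nat.cast_nonneg _),
      pow_rpow_theta_eq hp]
  rw [cpas, hden, Real.rpow_add_one two_ne_zero]
  field_simp
  linarith

end

theorem cpas_limits (p : ℕ) (hp : p.Prime) :
    Tendsto (fun k : ℕ => cpas p (p ^ k)) atTop (nhds (1 / 2)) ∧
    Tendsto (fun k : ℕ => cpas p (2 * p ^ k)) atTop
      (nhds (3 / (2 : ℝ) ^ (theta p + 1))) := by
  have he := tendsto_card_lucasAntidiagonal_div hp
  constructor
  · simp_rw [cpas_pow_eq hp]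
    simpa using (he.const_add 1).div_const 2
  · simp_rw [cpas_two_mul_pow_eq hp]
    simpa using (he.const_add 3).div_const (2 ^ (theta p + 1))
end

section
/- For every prime p ≥ 3, 3/2^{θ_p + 1} < 1/2, where θ_p = log(p(p+1)/2)/log p. Consequently, for p ≥ 3 the function c_p(u) = N_p(u)/u^{θ_p} (counting along anti-diagonals m+n < u of points with p ∤ C(m,n)) has at least two distinct accumulation points, namely 1/2 and 3/2^{θ_p + 1}, hence does not converge as u → ∞. -/
/-
By Lucas' theorem, `C(a p^k + r, b p^k + s) ≡ C(a, b) C(r, s) (mod p)` for `r, s < p^k`. Hence,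
for `c ≤ p`, the entries of the first `c p^k` rows of Pascal's triangle that are prime to `p`
form one copy of the first `p^k` rows for each pair `e ≤ d < c`, and the cut `m + n < L` meets
the copy `(d, e)` at height `L - (d + e) p^k`. With `T_k` the count in the first `p^k` rows this
gives `T_k = (p(p+1)/2)^k`, `N_p(2 p^k) = T_k + N_p(p^k)` and, for `p = 2h + 1`,
`N_p(p^{k+1}) = (h+1) N_p(p^k) + h(h+1) T_k`, so `2 N_p(p^k) = (p(p+1)/2)^k + ((p+1)/2)^k`.
Since `p^θ_p = p(p+1)/2`, `c_p(p^k) → 1/2` and `c_p(2 p^k) → 3 / 2^(θ_p + 1)`, and these differ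
because `θ_p > 8/5 > log 3 / log 2`, which comes down to `p^8 < (p(p+1)/2)^5`.
-/

open Filter

open Finset

namespace Nat

theorem Prime.dvd_choose_iff_lt {p a b : ℕ} (hp : p.Prime) (ha : a < p) :
    p ∣ a.choose b ↔ a < b := by
  refine ⟨fun hdvd => lt_of_not_ge fun hba => ?_, fun hab => by simp [choose_eq_zero_of_lt hab]⟩
  have : p ∣ a ! := hdvd.trans ⟨_, by rw [← choose_mul_factorial_mul_factorial hba, mul_assoc]⟩
  exact absurd ((hp.dvd_factorial).mp this) (by omega)

theorem choose_mul_pow_add_modEq {p : ℕ} [Fact p.Prime] (a b : ℕ) {k r s : ℕ}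
    (hr : r < p ^ k) (hs : s < p ^ k) :
    (a * p ^ k + r).choose (b * p ^ k + s) ≡ a.choose b * r.choose s [MOD p] := by
  induction k generalizing r s with
  | zero => simp_all [ModEq.refl]
  | succ k ih =>
    have hp : 0 < p := (Fact.out : p.Prime).pos
    have split (x t : ℕ) : (x * p ^ (k + 1) + t) % p = t % p ∧
        (x * p ^ (k + 1) + t) / p = x * p ^ k + t / p := by
      rw [show x * p ^ (k + 1) + t = t + p * (x * p ^ k) by ring]
      exact ⟨Nat.add_mul_mod_self_left .., by rw [Nat.add_mul_div_left _ _ hp]; ring⟩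
    have hdiv (t : ℕ) (ht : t < p ^ (k + 1)) : t / p < p ^ k :=
      Nat.div_lt_of_lt_mul (by rwa [← pow_succ'])
    obtain ⟨hr₁, hr₂⟩ := split a r
    obtain ⟨hs₁, hs₂⟩ := split b s
    calc (a * p ^ (k + 1) + r).choose (b * p ^ (k + 1) + s)
        ≡ (r % p).choose (s % p) * (a * p ^ k + r / p).choose (b * p ^ k + s / p) [MOD p] := by
          rw [← hr₁, ← hr₂, ← hs₁, ← hs₂]
          exact Choose.choose_modEq_choose_mod_mul_choose_div_nat
      _ ≡ (r % p).choose (s % p) * (a.choose b * (r / p).choose (s / p)) [MOD p] :=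
          (ih (hdiv r hr) (hdiv s hs)).mul_left _
      _ = a.choose b * ((r % p).choose (s % p) * (r / p).choose (s / p)) := by ring
      _ ≡ a.choose b * r.choose s [MOD p] :=
          (Choose.choose_modEq_choose_mod_mul_choose_div_nat).symm.mul_left _

theorem Prime.dvd_choose_mul_pow_add_iff {p a b k r s : ℕ} (hp : p.Prime) (ha : a < p)
    (hr : r < p ^ k) (hs : s < p ^ k) :
    p ∣ (a * p ^ k + r).choose (b * p ^ k + s) ↔ a < b ∨ p ∣ r.choose s := by
  have := Fact.mk hp
  rw [(choose_mul_pow_add_modEq a b hr hs).dvd_iff dvd_rfl, hp.dvd_mul, hp.dvd_choose_iff_lt ha]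

end Nat

theorem Finset.sum_range_mul {M : Type*} [AddCommMonoid M] (f : ℕ → M) (c b : ℕ) :
    ∑ m ∈ range (c * b), f m = ∑ d ∈ range c, ∑ r ∈ range b, f (d * b + r) := by
  induction c with
  | zero => simp
  | succ c ih => rw [add_mul, one_mul, sum_range_add, ih, sum_range_succ]

def pascalCount (p u L : ℕ) : ℕ :=
  #{x ∈ range u ×ˢ range u | x.1 + x.2 < L ∧ ¬ p ∣ x.1.choose x.2}

-- The condition `n ≤ m` of `Npas` is automatic: `C(m, n) = 0` when `m < n`.
lemma npas_eq_pascalCount (p u : ℕ) : Npas p u = pascalCount p u u := by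
  rw [Npas, pascalCount, ← Set.ncard_coe_finset]
  congr 1
  ext ⟨m, n⟩
  simp only [Set.mem_ofPred_eq, coe_filter, mem_product, mem_range]
  constructor
  · rintro ⟨-, hu, hndvd⟩
    exact ⟨⟨by omega, by omega⟩, hu, hndvd⟩
  · rintro ⟨-, hu, hndvd⟩
    refine ⟨le_of_not_gt fun hmn => hndvd ?_, hu, hndvd⟩
    simp [Nat.choose_eq_zero_of_lt hmn]

lemma pascalCount_eq_sum (p u L : ℕ) : pascalCount p u L =
    ∑ m ∈ range u, ∑ n ∈ range u, if m + n < L ∧ ¬ p ∣ m.choose n then 1 else 0 := by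
  rw [pascalCount, card_filter, sum_product]

lemma pascalCount_zero_right (p u : ℕ) : pascalCount p u 0 = 0 := by
  simp [pascalCount]

lemma pascalCount_of_two_mul_le {p u L : ℕ} (hL : 2 * u ≤ L) :
    pascalCount p u L = pascalCount p u (2 * u) := by
  unfold pascalCount
  congr 1
  refine filter_congr fun x hx => ?_
  simp only [mem_product, mem_range] at hx
  constructor <;> rintro ⟨-, h⟩ <;> exact ⟨by omega, h⟩

lemma pascalCount_mul_pow {p c : ℕ} (hp : p.Prime) (hc : c ≤ p) (k L : ℕ) :
    pascalCount p (c * p ^ k) L =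
      ∑ d ∈ range c, ∑ e ∈ range (d + 1), pascalCount p (p ^ k) (L - (d + e) * p ^ k) := by
  simp_rw [pascalCount_eq_sum, sum_range_mul]
  refine sum_congr rfl fun d hd => ?_
  rw [mem_range] at hd
  have hrange : range (d + 1) = {e ∈ range c | e ≤ d} := by
    ext e; simp only [mem_range, mem_filter]; omega
  rw [sum_comm, hrange, sum_filter]
  refine sum_congr rfl fun e he => ?_
  rw [mem_range] at he
  split_ifs with hed
  · refine sum_congr rfl fun r hr => sum_congr rfl fun s hs => if_congr ?_ rfl rfl
    rw [mem_range] at hr hs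
    rw [hp.dvd_choose_mul_pow_add_iff (by omega) hr hs, not_or, add_mul]
    exact ⟨fun ⟨hL, _, hrs⟩ => ⟨by omega, hrs⟩, fun ⟨hL, hrs⟩ => ⟨by omega, by omega, hrs⟩⟩
  · refine sum_eq_zero fun r hr => sum_eq_zero fun s hs => if_neg ?_
    rw [mem_range] at hr hs
    rw [hp.dvd_choose_mul_pow_add_iff (by omega) hr hs, not_or]
    exact fun ⟨_, hde, _⟩ => hde (by omega)

-- Without the pairs with `e = 0` or `d = c + 1`, the triangle `e ≤ d < c + 2` is the triangle
-- `e ≤ d < c` shifted by `(1, 1)`.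
lemma sum_triangle_add_two {M : Type*} [AddCommMonoid M] (g : ℕ → M) (hg : g 0 = 0) (c : ℕ) :
    ∑ d ∈ range (c + 2), ∑ e ∈ range (d + 1), g (c + 2 - (d + e)) =
      ∑ d ∈ range c, ∑ e ∈ range (d + 1), g (c - (d + e)) + ∑ j ∈ range (c + 2), g (j + 1) := by
  have inner (d : ℕ) : ∑ e ∈ range (d + 2), g (c + 2 - (d + 1 + e)) =
      ∑ e ∈ range (d + 1), g (c - (d + e)) + g (c + 1 - d) := by
    rw [sum_range_succ']
    congr 1
    · exact sum_congr rfl fun e _ => by congr 1; omega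
    · congr 1; omega
  have last : ∑ e ∈ range (c + 1), g (c - (c + e)) = 0 :=
    sum_eq_zero fun e _ => by rw [show c - (c + e) = 0 by omega, hg]
  have reflect :
      ∑ j ∈ range (c + 2), g (j + 1) = ∑ d ∈ range (c + 1), g (c + 1 - d) + g (c + 2) := by
    rw [← sum_range_reflect, sum_range_succ']
    congr 1
    exact sum_congr rfl fun d hd => by rw [mem_range] at hd; congr 1; omega
  rw [sum_range_succ', sum_congr rfl fun d _ => inner d, sum_add_distrib, sum_range_succ, last,
    reflect]
  simp only [add_zero, zero_add, sum_range_one]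
  abel

lemma sum_triangle_odd (g : ℕ → ℕ) (hg₀ : g 0 = 0) (hg : ∀ j, 2 ≤ j → g j = g 2) (h : ℕ) :
    ∑ d ∈ range (2 * h + 1), ∑ e ∈ range (d + 1), g (2 * h + 1 - (d + e)) =
      (h + 1) * g 1 + h * (h + 1) * g 2 := by
  induction h with
  | zero => simp
  | succ h ih =>
    have layer : ∑ j ∈ range (2 * h + 3), g (j + 1) = g 1 + (2 * h + 2) * g 2 := by
      rw [sum_range_succ', sum_congr rfl fun j _ => hg (j + 1 + 1) (by omega)]
      simp only [sum_const, card_range, smul_eq_mul]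
      ring
    rw [show 2 * (h + 1) + 1 = 2 * h + 1 + 2 by ring, sum_triangle_add_two g hg₀, ih, layer]
    ring

lemma two_mul_sum_range_succ (c : ℕ) : 2 * ∑ d ∈ range c, (d + 1) = c * (c + 1) := by
  have := sum_range_id_mul_two (c + 1)
  rw [sum_range_succ'] at this
  simp only [add_zero, add_tsub_cancel_right] at this
  linarith

lemma two_pow_mul_pascalCount_pow {p : ℕ} (hp : p.Prime) (k : ℕ) :
    2 ^ k * pascalCount p (p ^ k) (2 * p ^ k) = (p * (p + 1)) ^ k := by
  induction k with
  | zero => simp [pascalCount, filter_singleton, hp.ne_one]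
  | succ k ih =>
    have hblock : pascalCount p (p ^ (k + 1)) (2 * p ^ (k + 1)) =
        (∑ d ∈ range p, (d + 1)) * pascalCount p (p ^ k) (2 * p ^ k) := by
      rw [pow_succ', pascalCount_mul_pow hp le_rfl, sum_mul]
      refine sum_congr rfl fun d hd => ?_
      rw [mem_range] at hd
      rw [sum_const_nat fun e he => pascalCount_of_two_mul_le ?_, card_range]
      rw [mem_range] at he
      have : (d + e + 2) * p ^ k ≤ 2 * p * p ^ k := Nat.mul_le_mul_right _ (by omega)
      rw [add_mul, mul_assoc] at this
      omega
    rw [hblock, pow_succ, pow_succ, ← ih, ← two_mul_sum_range_succ]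
    ring

lemma npas_two_mul_pow {p : ℕ} (hp : p.Prime) (k : ℕ) :
    Npas p (2 * p ^ k) = pascalCount p (p ^ k) (2 * p ^ k) + Npas p (p ^ k) := by
  rw [npas_eq_pascalCount, npas_eq_pascalCount, pascalCount_mul_pow hp hp.two_le]
  simp [sum_range_succ, pascalCount_zero_right, two_mul]

lemma npas_pow_succ {h : ℕ} (hp : (2 * h + 1).Prime) (k : ℕ) :
    Npas (2 * h + 1) ((2 * h + 1) ^ (k + 1)) = (h + 1) * Npas (2 * h + 1) ((2 * h + 1) ^ k) +
      h * (h + 1) * pascalCount (2 * h + 1) ((2 * h + 1) ^ k) (2 * (2 * h + 1) ^ k) := by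
  set p := 2 * h + 1
  set g : ℕ → ℕ := fun j => pascalCount p (p ^ k) (j * p ^ k) with hg
  have hg₀ : g 0 = 0 := by simp [hg, pascalCount_zero_right]
  have hg₂ (j : ℕ) (hj : 2 ≤ j) : g j = g 2 :=
    pascalCount_of_two_mul_le (Nat.mul_le_mul_right _ hj)
  rw [npas_eq_pascalCount, npas_eq_pascalCount, pow_succ', pascalCount_mul_pow hp le_rfl]
  simp_rw [← Nat.sub_mul]
  rw [sum_triangle_odd g hg₀ hg₂ h]
  simp [hg]

lemma two_pow_succ_mul_npas_pow {p : ℕ} (hp : p.Prime) (hp2 : p ≠ 2) (k : ℕ) :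
    2 ^ (k + 1) * Npas p (p ^ k) = (p * (p + 1)) ^ k + (p + 1) ^ k := by
  obtain ⟨h, rfl⟩ := hp.odd_of_ne_two hp2
  induction k with
  | zero =>
    have : h ≠ 0 := by rintro rfl; exact Nat.not_prime_one hp
    simp [npas_eq_pascalCount, pascalCount, filter_singleton, this]
  | succ k ih =>
    have hT := two_pow_mul_pascalCount_pow hp k
    rw [npas_pow_succ hp]
    calc 2 ^ (k + 1 + 1) * ((h + 1) * Npas (2 * h + 1) ((2 * h + 1) ^ k) +
          h * (h + 1) * pascalCount (2 * h + 1) ((2 * h + 1) ^ k) (2 * (2 * h + 1) ^ k))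
        = 2 * (h + 1) * (2 ^ (k + 1) * Npas (2 * h + 1) ((2 * h + 1) ^ k)) +
          4 * h * (h + 1) * (2 ^ k * pascalCount (2 * h + 1) ((2 * h + 1) ^ k)
            (2 * (2 * h + 1) ^ k)) := by ring
      _ = _ := by rw [ih, hT]; ring

lemma rpow_theta {p : ℕ} (hp : 1 < p) : (p : ℝ) ^ theta p = p * (p + 1) / 2 := by
  have hp' : (1 : ℝ) < p := by exact_mod_cast hp
  rw [theta, Real.log_div_log, Real.rpow_logb (by linarith) hp'.ne' (by positivity)]

lemma natCast_pow_rpow_theta {p : ℕ} (hp : 1 < p) (k : ℕ) :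
    ((p ^ k : ℕ) : ℝ) ^ theta p = (p * (p + 1) / 2) ^ k := by
  rw [Nat.cast_pow, ← Real.rpow_pow_comm (by positivity), rpow_theta hp]

lemma natCast_npas_pow {p : ℕ} (hp : p.Prime) (hp2 : p ≠ 2) (k : ℕ) :
    (Npas p (p ^ k) : ℝ) = ((p * (p + 1)) ^ k + (p + 1) ^ k) / 2 ^ (k + 1) := by
  rw [eq_div_iff (by positivity), mul_comm]
  exact_mod_cast two_pow_succ_mul_npas_pow hp hp2 k

lemma natCast_pascalCount_pow {p : ℕ} (hp : p.Prime) (k : ℕ) :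
    (pascalCount p (p ^ k) (2 * p ^ k) : ℝ) = (p * (p + 1)) ^ k / 2 ^ k := by
  rw [eq_div_iff (by positivity), mul_comm]
  exact_mod_cast two_pow_mul_pascalCount_pow hp k

lemma cpas_pow {p : ℕ} (hp : p.Prime) (hp2 : p ≠ 2) (k : ℕ) :
    cpas p (p ^ k) = (1 + (p : ℝ)⁻¹ ^ k) / 2 := by
  have : (p : ℝ) ≠ 0 := by exact_mod_cast hp.ne_zero
  rw [cpas, natCast_pow_rpow_theta hp.one_lt, natCast_npas_pow hp hp2]
  simp only [mul_pow, div_pow, inv_pow, pow_succ]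
  field_simp

lemma cpas_two_mul_pow {p : ℕ} (hp : p.Prime) (hp2 : p ≠ 2) (k : ℕ) :
    cpas p (2 * p ^ k) = (3 + (p : ℝ)⁻¹ ^ k) / 2 ^ (theta p + 1) := by
  have hden : ((2 * p ^ k : ℕ) : ℝ) ^ theta p = 2 ^ theta p * (p * (p + 1) / 2) ^ k := by
    rw [Nat.cast_mul, Real.mul_rpow (by norm_num) (by positivity),
      natCast_pow_rpow_theta hp.one_lt]
    norm_num
  have : (p : ℝ) ≠ 0 := by exact_mod_cast hp.ne_zero
  have : (0 : ℝ) < 2 ^ theta p := by positivity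
  rw [cpas, hden, npas_two_mul_pow hp, Nat.cast_add, natCast_npas_pow hp hp2,
    natCast_pascalCount_pow hp, Real.rpow_add_one two_ne_zero]
  simp only [mul_pow, div_pow, inv_pow, pow_succ]
  field_simp
  ring

lemma tendsto_inv_natCast_pow {p : ℕ} (hp : 1 < p) :
    Tendsto (fun k => (p : ℝ)⁻¹ ^ k) atTop (nhds 0) :=
  tendsto_pow_atTop_nhds_zero_of_lt_one (by positivity)
    (inv_lt_one_of_one_lt₀ (by exact_mod_cast hp))

lemma tendsto_cpas_pow {p : ℕ} (hp : p.Prime) (hp2 : p ≠ 2) :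
    Tendsto (fun k => cpas p (p ^ k)) atTop (nhds (1 / 2)) := by
  simp_rw [cpas_pow hp hp2]
  simpa using ((tendsto_inv_natCast_pow hp.one_lt).const_add 1).div_const 2

lemma tendsto_cpas_two_mul_pow {p : ℕ} (hp : p.Prime) (hp2 : p ≠ 2) :
    Tendsto (fun k => cpas p (2 * p ^ k)) atTop (nhds (3 / 2 ^ (theta p + 1))) := by
  simp_rw [cpas_two_mul_pow hp hp2]
  simpa using ((tendsto_inv_natCast_pow hp.one_lt).const_add 3).div_const _

lemma three_lt_two_rpow_theta {p : ℕ} (hp : 3 ≤ p) : 3 < (2 : ℝ) ^ theta p := by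
  have hx : (3 : ℝ) ≤ p := by exact_mod_cast hp
  have hpow : (p : ℝ) ^ 8 < (p * (p + 1) / 2) ^ 5 := by
    have h3 : 32 * (p : ℝ) ^ 3 < (p + 1) ^ 5 := by
      nlinarith [pow_pos (by linarith : (0 : ℝ) < p) 3, pow_pos (by linarith : (0 : ℝ) < p) 4]
    rw [div_pow, mul_pow, lt_div_iff₀ (by norm_num)]
    nlinarith [mul_lt_mul_of_pos_left h3 (pow_pos (by linarith : (0 : ℝ) < p) 5)]
  have hlog : 8 * Real.log p < 5 * Real.log (p * (p + 1) / 2) := by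
    simpa [Real.log_pow] using Real.log_lt_log (by positivity) hpow
  have h32 : 5 * Real.log 3 < 8 * Real.log 2 := by
    simpa [Real.log_pow] using
      Real.log_lt_log (by norm_num) (show (3 : ℝ) ^ 5 < 2 ^ 8 by norm_num)
  have hlogp : 0 < Real.log p := Real.log_pos (by linarith)
  have hlog3 : 0 < Real.log 3 := Real.log_pos (by norm_num)
  rw [Real.lt_rpow_iff_log_lt (by norm_num) (by norm_num), theta, div_mul_eq_mul_div,
    lt_div_iff₀ hlogp]
  nlinarith [mul_lt_mul'' h32 hlog (by positivity) (by positivity)]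

theorem cpas_not_convergent_of_three_le (p : ℕ) (hp : p.Prime) (hp3 : 3 ≤ p) :
    3 / (2 : ℝ) ^ (theta p + 1) < 1 / 2 ∧
    MapClusterPt ((1 : ℝ) / 2) atTop (fun u : ℕ => cpas p u) ∧
    MapClusterPt (3 / (2 : ℝ) ^ (theta p + 1)) atTop (fun u : ℕ => cpas p u) ∧
    ¬ ∃ L : ℝ, Tendsto (fun u : ℕ => cpas p u) atTop (nhds L) := by
  have hp2 : p ≠ 2 := by omega
  have hlt : 3 / (2 : ℝ) ^ (theta p + 1) < 1 / 2 := by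
    rw [Real.rpow_add_one two_ne_zero, div_lt_div_iff₀ (by positivity) two_pos]
    linarith [three_lt_two_rpow_theta hp3]
  have hpow : Tendsto (fun k => p ^ k) atTop atTop :=
    tendsto_pow_atTop_atTop_of_one_lt hp.one_lt
  have htwo_pow : Tendsto (fun k => 2 * p ^ k) atTop atTop :=
    tendsto_id.const_mul_atTop' two_pos |>.comp hpow
  refine ⟨hlt, (tendsto_cpas_pow hp hp2).mapClusterPt.of_comp hpow,
    (tendsto_cpas_two_mul_pow hp hp2).mapClusterPt.of_comp htwo_pow, ?_⟩
  rintro ⟨L, hL⟩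
  have h₁ := tendsto_nhds_unique (hL.comp hpow) (tendsto_cpas_pow hp hp2)
  have h₂ := tendsto_nhds_unique (hL.comp htwo_pow) (tendsto_cpas_two_mul_pow hp hp2)
  linarith
end

section
/- Let ψ_p(q) = #{(m,n) : m ≥ n ≥ 0, p ∤ C(m,n), m + p·n = q} (extended by 0 to negative q). Then for every nonnegative integer q and r ∈ {0,...,p−1}, ψ_p(pq + r) = Σ_{a=0}^{r} ψ_p(q − a). -/
/-- `ψ_p(q)`: number of `(m,n)` with `m ≥ n ≥ 0`, `p ∤ C(m,n)` and `m + p·n = q`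
(extended by `0` to negative `q`). -/
noncomputable def psi (p : ℕ) (q : ℤ) : ℕ :=
  {mn : ℕ × ℕ | mn.2 ≤ mn.1 ∧ (mn.1 : ℤ) + (p : ℤ) * (mn.2 : ℤ) = q ∧
    ¬ p ∣ Nat.choose mn.1 mn.2}.ncard

/-!
Write `M = p m + r` and `N = p n + a` in base `p`. Then `M + p N = p q + r` forces the last digit
of `M` to be `r` and reduces to `m + p n = q - a`, while Lucas's theorem says that
`p ∤ C(M, N)` exactly when `a ≤ r` and `p ∤ C(m, n)`. So `(m, n, a) ↦ (p m + r, p n + a)` is a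
bijection from the pairs counted by `ψ_p(q - a)`, `a ≤ r`, onto those counted by `ψ_p(p q + r)`.
-/

theorem Nat.Prime.dvd_choose_mul_add_mul_add_iff {p m n r a : ℕ} (hp : p.Prime) (hr : r < p)
    (ha : a < p) : p ∣ (p * m + r).choose (p * n + a) ↔ r < a ∨ p ∣ m.choose n := by
  have := Fact.mk hp
  have lucas := Choose.choose_modEq_choose_mod_mul_choose_div_nat (p := p)
    (n := p * m + r) (k := p * n + a)
  simp only [Nat.mul_add_mod, Nat.mod_eq_of_lt hr, Nat.mod_eq_of_lt ha, Nat.mul_add_div hp.pos,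
    Nat.div_eq_of_lt hr, Nat.div_eq_of_lt ha, add_zero] at lucas
  have digit : p ∣ r.choose a ↔ r < a := by
    refine ⟨fun h => lt_of_not_ge fun hle => ?_, fun h => by simp [Nat.choose_eq_zero_of_lt h]⟩
    exact (Nat.Prime.coprime_iff_not_dvd hp).1 (hp.coprime_choose_of_lt hr hle) h
  rw [lucas.dvd_iff dvd_rfl, hp.dvd_mul, digit]

section

variable {p : ℕ} {q : ℤ}

def psiSet (p : ℕ) (q : ℤ) : Set (ℕ × ℕ) :=
  {mn | mn.2 ≤ mn.1 ∧ (mn.1 : ℤ) + (p : ℤ) * (mn.2 : ℤ) = q ∧ ¬ p ∣ Nat.choose mn.1 mn.2}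

theorem psi_eq_ncard_psiSet : psi p q = (psiSet p q).ncard := rfl

theorem psiSet_finite : (psiSet p q).Finite := by
  refine (Set.finite_Iic (q.toNat, q.toNat)).subset fun mn ⟨hle, heq, _⟩ => ?_
  have : (0 : ℤ) ≤ p * mn.2 := by positivity
  exact Prod.mk_le_mk.2 ⟨by omega, by omega⟩

theorem mem_psiSet {m n : ℕ} :
    (m, n) ∈ psiSet p q ↔ (m : ℤ) + p * n = q ∧ ¬ p ∣ m.choose n := by
  refine ⟨fun h => h.2, fun h => ⟨le_of_not_gt fun hlt => h.2 ?_, h⟩⟩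
  simp [Nat.choose_eq_zero_of_lt hlt]

theorem mul_add_mem_psiSet_iff {r a : ℕ} (hp : p.Prime) (hr : r < p) (ha : a < p) {m n : ℕ} :
    (p * m + r, p * n + a) ∈ psiSet p (p * q + r) ↔ a ≤ r ∧ (m, n) ∈ psiSet p (q - a) := by
  have hp0 : (p : ℤ) ≠ 0 := by exact_mod_cast hp.ne_zero
  have heq : ((p * m + r : ℕ) : ℤ) + p * (p * n + a : ℕ) = p * q + r ↔
      (m : ℤ) + p * n = q - a := by
    push_cast
    rw [← mul_right_inj' hp0 (b := (m : ℤ) + p * n)]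
    constructor <;> intro h <;> linarith
  rw [mem_psiSet, mem_psiSet, heq, hp.dvd_choose_mul_add_mul_add_iff hr ha, not_or, not_lt]
  tauto

theorem mod_eq_of_mem_psiSet {r M N : ℕ} (hr : r < p) (h : (M, N) ∈ psiSet p (p * q + r)) :
    M % p = r := by
  have hM : (M : ℤ) = r + p * (q - N) := by linarith [(mem_psiSet.1 h).1]
  have : ((M % p : ℕ) : ℤ) = r := by
    rw [Int.natCast_mod, hM, Int.add_mul_emod_self_left,
      Int.emod_eq_of_lt (by positivity) (by exact_mod_cast hr)]
  exact_mod_cast this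

theorem psi_mul_add {r : ℕ} (hp : p.Prime) (hr : r < p) :
    psi p (p * q + r) = ∑ a ∈ Finset.range (r + 1), psi p (q - a) := by
  simp only [psi_eq_ncard_psiSet, Set.ncard_eq_toFinset_card _ psiSet_finite]
  rw [← Finset.card_sigma]
  symm
  refine Finset.card_nbij' (fun x => (p * x.2.1 + r, p * x.2.2 + x.1))
    (fun y => ⟨y.2 % p, (y.1 / p, y.2 / p)⟩) ?_ ?_ ?_ ?_
  · rintro ⟨a, m, n⟩ h
    simp only [Finset.coe_sigma, Finset.coe_range, Set.Finite.coe_toFinset, Set.mem_sigma_iff,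
      Set.mem_Iio, Order.lt_add_one_iff] at h ⊢
    exact (mul_add_mem_psiSet_iff hp hr (by omega)).2 h
  · rintro ⟨M, N⟩ h
    simp only [Set.Finite.coe_toFinset, Finset.coe_sigma, Finset.coe_range, Set.mem_sigma_iff,
      Set.mem_Iio, Order.lt_add_one_iff] at h ⊢
    have hM := mod_eq_of_mem_psiSet hr h
    rwa [← Nat.div_add_mod M p, ← Nat.div_add_mod N p, hM,
      mul_add_mem_psiSet_iff hp hr (Nat.mod_lt _ hp.pos)] at h
  · rintro ⟨a, m, n⟩ h
    simp only [Finset.coe_sigma, Finset.coe_range, Set.mem_sigma_iff, Set.mem_Iio] at h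
    have ha : a < p := by omega
    simp only [Nat.mul_add_mod, Nat.mod_eq_of_lt ha, Nat.mul_add_div hp.pos, Nat.div_eq_of_lt ha,
      Nat.div_eq_of_lt hr, add_zero]
  · rintro ⟨M, N⟩ h
    simp only [Set.Finite.coe_toFinset] at h
    simp only [Prod.mk.injEq]
    exact ⟨by rw [← mod_eq_of_mem_psiSet hr h, Nat.div_add_mod], Nat.div_add_mod N p⟩

end

theorem psi_rec (p : ℕ) (hp : p.Prime) (q : ℕ) (r : ℕ) (hr : r < p) :
    psi p ((p : ℤ) * q + r) = ∑ a ∈ Finset.range (r + 1), psi p ((q : ℤ) - a) :=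
  psi_mul_add hp hr
end
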